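/- arXiv:1108.6046 — 9 statements merged into one kernel-verified Lean document; each statement's English description precedes it below -/
import Mathlib

section
/- Let f : 2^M → ℝ be a submodular function with f(∅) = 0, let α ∈ ℝ^M with α_{j(1)} ≥ α_{j(2)} ≥ ⋯ ≥ α_{j(m)} ≥ 0 for an ordering j of M = {1,…,m}, and define Z_{j(i)} = f(A_i) − f(A_{i−1}) where A_i = {j(1),…,j(i)} and A_0 = ∅. Then Z ∈ P(f,≤) and Z maximizes ∑_{i∈M} α_i Z_i over P(f,≤). -/
open Finset

/-- Abel summation auxiliary lemma. -/
lemma edmonds_abel_aux (a D : ℕ → ℝ) (hmono : ∀ s t : ℕ, s ≤ t → a t ≤ a s)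
    (hD0 : D 0 = 0) (hD : ∀ k, 0 ≤ D k) :
    ∀ n : ℕ, ∀ b : ℝ, 0 ≤ b → (∀ k, k < n → b ≤ a k) →
      b * D n ≤ ∑ k ∈ Finset.range n, a k * (D (k + 1) - D k) := by
  intro n
  induction n with
  | zero => intro b hb _; simp [hD0]
  | succ n ih =>
    intro b hb hba
    have han : b ≤ a n := hba n (Nat.lt_succ_self n)
    have h0an : 0 ≤ a n := hb.trans han
    have hIH := ih (a n) h0an (fun k hk => hmono k n hk.le)
    rw [Finset.sum_range_succ]
    have h1 : b * D (n + 1) ≤ a n * D (n + 1) :=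
      mul_le_mul_of_nonneg_right han (hD _)
    nlinarith [hD (n + 1), hD n]

/-- Edmonds' greedy algorithm: for a submodular `f` with `f ∅ = 0`, weights
`α ≥ 0` sorted non-increasingly along the ordering `j`, the greedy vector
`Z (j k) = f (A_{k+1}) - f (A_k)` (with `A_k = {j 0, …, j (k-1)}`) lies in `P(f,≤)` and
maximizes `∑ α i * Z i` over `P(f,≤)`. -/
theorem edmonds_greedy {m : ℕ} (f : Finset (Fin m) → ℝ) (hf0 : f ∅ = 0)
    (hsub : ∀ S T : Finset (Fin m), f (S ∪ T) + f (S ∩ T) ≤ f S + f T)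
    (α : Fin m → ℝ) (hα0 : ∀ i, 0 ≤ α i)
    (j : Equiv.Perm (Fin m))
    (hord : ∀ s t : Fin m, s ≤ t → α (j t) ≤ α (j s))
    (Z : Fin m → ℝ)
    (hZ : ∀ k : Fin m, Z (j k) =
      f (Finset.univ.filter (fun u => (j.symm u : ℕ) ≤ (k : ℕ)))
        - f (Finset.univ.filter (fun u => (j.symm u : ℕ) < (k : ℕ)))) :
    (∀ S : Finset (Fin m), ∑ i ∈ S, Z i ≤ f S) ∧
      ∀ Y : Fin m → ℝ, (∀ S : Finset (Fin m), ∑ i ∈ S, Y i ≤ f S) →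
        ∑ i, α i * Y i ≤ ∑ i, α i * Z i := by
  set A : ℕ → Finset (Fin m) :=
    fun n => Finset.univ.filter (fun u => (j.symm u : ℕ) < n) with hA
  have hA0 : A 0 = ∅ := by simp [hA]
  have hjA : ∀ k : Fin m, j k ∉ A (k : ℕ) := by
    intro k
    simp [hA]
  have hAstep : ∀ k : Fin m, A ((k : ℕ) + 1) = insert (j k) (A (k : ℕ)) := by
    intro k
    ext u
    simp only [hA, mem_filter, mem_univ, true_and, mem_insert, Nat.lt_succ_iff]
    rw [Nat.le_iff_lt_or_eq]
    constructor
    · rintro (h | h)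
      · exact Or.inr h
      · left
        have : j.symm u = k := Fin.ext h
        rw [Equiv.symm_apply_eq] at this
        exact this
    · rintro (h | h)
      · right
        rw [← Equiv.symm_apply_eq] at h
        rw [h]
      · exact Or.inl h
  have hZA : ∀ k : Fin m, Z (j k) = f (A ((k : ℕ) + 1)) - f (A (k : ℕ)) := by
    intro k
    rw [hZ k]
    have : Finset.univ.filter (fun u => (j.symm u : ℕ) ≤ (k : ℕ)) = A ((k : ℕ) + 1) := by
      ext u
      simp [hA, Nat.lt_succ_iff]
    rw [this]
  have main1 : ∀ n : ℕ, ∀ S : Finset (Fin m), S ⊆ A n → ∑ i ∈ S, Z i ≤ f S := by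
    intro n
    induction n with
    | zero =>
      intro S hS
      have : S = ∅ := subset_empty.mp (hA0 ▸ hS)
      simp [this, hf0]
    | succ n ih =>
      intro S hS
      by_cases h : n < m
      · set k : Fin m := ⟨n, h⟩ with hk
        have hstep : A (n + 1) = insert (j k) (A n) := hAstep k
        by_cases hjS : j k ∈ S
        · have hSsub : S.erase (j k) ⊆ A n := by
            intro u hu
            have hmem := hS (mem_of_mem_erase hu)
            rw [hstep, mem_insert] at hmem
            rcases hmem with h1 | h1
            · exact absurd h1 (ne_of_mem_erase hu)
            · exact h1
          have hIH := ih _ hSsub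
          have hunion : A n ∪ S = A (n + 1) := by
            apply Finset.Subset.antisymm
            · rw [hstep]
              intro u hu
              rcases mem_union.mp hu with h1 | h1
              · exact mem_insert_of_mem h1
              · exact hstep ▸ hS h1
            · rw [hstep]
              intro u hu
              rcases mem_insert.mp hu with h1 | h1
              · exact mem_union_right _ (h1 ▸ hjS)
              · exact mem_union_left _ h1
          have hinter : A n ∩ S = S.erase (j k) := by
            apply Finset.Subset.antisymm
            · intro u hu
              rcases mem_inter.mp hu with ⟨h1, h2⟩
              exact mem_erase.mpr ⟨fun he => (hjA k) (he ▸ h1), h2⟩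
            · intro u hu
              exact mem_inter.mpr ⟨hSsub hu, mem_of_mem_erase hu⟩
          have hsubm := hsub (A n) S
          rw [hunion, hinter] at hsubm
          have hZk : Z (j k) = f (A (n + 1)) - f (A n) := hZA k
          have hsplit : ∑ i ∈ S, Z i = Z (j k) + ∑ i ∈ S.erase (j k), Z i :=
            (Finset.add_sum_erase S Z hjS).symm
          linarith
        · apply ih
          intro u hu
          have hmem := hS hu
          rw [hstep, mem_insert] at hmem
          rcases hmem with h1 | h1
          · exact absurd (h1 ▸ hu) hjS
          · exact h1
      · have hAeq : A (n + 1) = A n := by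
          ext u
          simp only [hA, mem_filter, mem_univ, true_and]
          have := (j.symm u).isLt
          omega
        exact ih S (hAeq ▸ hS)
  have part1 : ∀ S : Finset (Fin m), ∑ i ∈ S, Z i ≤ f S := by
    intro S
    apply main1 m
    intro u _
    simp [hA, (j.symm u).isLt]
  refine ⟨part1, ?_⟩
  intro Y hY
  set D : ℕ → ℝ := fun n => f (A n) - ∑ i ∈ A n, Y i with hD
  have hD0 : D 0 = 0 := by simp [hD, hA0, hf0]
  have hDnn : ∀ n, 0 ≤ D n := fun n => sub_nonneg.mpr (hY (A n))
  set a : ℕ → ℝ := fun k => if h : k < m then α (j ⟨k, h⟩) else 0 with ha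
  have hamono : ∀ s t : ℕ, s ≤ t → a t ≤ a s := by
    intro s t hst
    by_cases ht : t < m
    · have hs : s < m := lt_of_le_of_lt hst ht
      simp only [ha, dif_pos ht, dif_pos hs]
      exact hord ⟨s, hs⟩ ⟨t, ht⟩ hst
    · by_cases hs : s < m
      · simp only [ha, dif_neg ht, dif_pos hs]
        exact hα0 _
      · simp [ha, dif_neg ht, dif_neg hs]
  have key := edmonds_abel_aux a D hamono hD0 hDnn m 0 le_rfl
    (fun k hk => by simp only [ha, dif_pos hk]; exact hα0 _)
  rw [zero_mul] at key
  have hdiff : ∀ k : Fin m, D ((k : ℕ) + 1) - D (k : ℕ) = Z (j k) - Y (j k) := by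
    intro k
    have hYs : ∑ i ∈ A ((k : ℕ) + 1), Y i = Y (j k) + ∑ i ∈ A (k : ℕ), Y i := by
      rw [hAstep k, Finset.sum_insert (hjA k)]
    simp only [hD]
    rw [hZA k, hYs]
    ring
  have hsum : ∑ k ∈ Finset.range m, a k * (D (k + 1) - D k)
      = ∑ i, α i * Z i - ∑ i, α i * Y i := by
    rw [← Finset.sum_sub_distrib,
      ← Equiv.sum_comp j (fun i => α i * Z i - α i * Y i),
      ← Fin.sum_univ_eq_sum_range (fun k => a k * (D (k + 1) - D k)) m]
    apply Finset.sum_congr rfl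
    intro k _
    have hak : a (k : ℕ) = α (j k) := by
      simp [ha, k.isLt]
    rw [hak, hdiff k]
    ring
  linarith
end

section
/- If f : 2^M → ℝ is submodular with f(∅) = 0, then the greedy vector Z defined by Z_{j(i)} = f(A_i) − f(A_{i−1}) for any ordering j of M satisfies Z(M) = f(M); in particular the base polyhedron B(f,≤) is nonempty. -/
open Finset

/-- for submodular `f` with `f ∅ = 0`, the greedy vector for any ordering `j`
satisfies `Z(M) = f(M)`; in particular the base polyhedron `B(f,≤)` is nonempty. -/
theorem greedy_sum_eq_and_base_nonempty {m : ℕ}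
    (f : Finset (Fin m) → ℝ) (hf0 : f ∅ = 0)
    (hsub : ∀ S T : Finset (Fin m), f (S ∪ T) + f (S ∩ T) ≤ f S + f T)
    (j : Equiv.Perm (Fin m))
    (Z : Fin m → ℝ)
    (hZ : ∀ k : Fin m, Z (j k) =
      f (Finset.univ.filter (fun u => (j.symm u : ℕ) ≤ (k : ℕ)))
        - f (Finset.univ.filter (fun u => (j.symm u : ℕ) < (k : ℕ)))) :
    ∑ i, Z i = f Finset.univ ∧
      Set.Nonempty {W : Fin m → ℝ |
        (∀ S : Finset (Fin m), ∑ i ∈ S, W i ≤ f S) ∧ ∑ i, W i = f Finset.univ} := by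
  -- telescoping sum
  set g : ℕ → ℝ := fun n => f (Finset.univ.filter (fun u => (j.symm u : ℕ) < n)) with hg
  have hsum : ∑ i, Z i = f Finset.univ := by
    have h1 : ∑ i, Z i = ∑ k, Z (j k) := (Equiv.sum_comp j Z).symm
    have h2 : ∀ k : Fin m, Z (j k) = g ((k : ℕ) + 1) - g (k : ℕ) := by
      intro k
      rw [hZ k]
      have e1 : (Finset.univ.filter (fun u : Fin m => (j.symm u : ℕ) ≤ (k : ℕ)))
          = (Finset.univ.filter (fun u : Fin m => (j.symm u : ℕ) < (k : ℕ) + 1)) := by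
        ext u; simp only [mem_filter, mem_univ, true_and]; omega
      simp only [hg, e1]
    rw [h1]
    simp_rw [h2]
    rw [Fin.sum_univ_eq_sum_range (fun k => g (k + 1) - g k), Finset.sum_range_sub]
    have hgm : g m = f Finset.univ := by
      have e : (Finset.univ.filter (fun u : Fin m => (j.symm u : ℕ) < m)) = Finset.univ := by
        ext u; simp [(j.symm u).isLt]
      simp only [hg, e]
    have hg0 : g 0 = 0 := by
      have : (Finset.univ.filter (fun u : Fin m => (j.symm u : ℕ) < 0)) = ∅ := by
        ext u; simp
      simp [hg, this, hf0]
    rw [hgm, hg0, sub_zero]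
  refine ⟨hsum, ⟨Z, ?_, hsum⟩⟩
  -- feasibility
  intro S
  induction S using Finset.strongInduction with
  | _ S ih =>
    rcases S.eq_empty_or_nonempty with rfl | hS
    · simp [hf0]
    · have hne : (S.image j.symm).Nonempty := hS.image _
      set k : Fin m := (S.image j.symm).max' hne with hk
      have hkmem : k ∈ S.image j.symm := max'_mem _ _
      obtain ⟨u, huS, huk⟩ := mem_image.mp hkmem
      have hu : u = j k := by rw [← huk]; simp
      set A' : Finset (Fin m) := Finset.univ.filter (fun v => (j.symm v : ℕ) < (k : ℕ)) with hA'
      set A : Finset (Fin m) := Finset.univ.filter (fun v => (j.symm v : ℕ) ≤ (k : ℕ)) with hA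
      have hsubset : S.erase u ⊆ A' := by
        intro v hv
        have hvS := mem_of_mem_erase hv
        have hvne := ne_of_mem_erase hv
        have hle : j.symm v ≤ k := le_max' _ _ (mem_image_of_mem _ hvS)
        have hne2 : j.symm v ≠ k := by
          intro h; apply hvne
          rw [← huk] at h
          exact j.symm.injective h
        simp only [hA', mem_filter, mem_univ, true_and]
        have : j.symm v < k := lt_of_le_of_ne hle hne2
        exact this
      have hunotA' : u ∉ A' := by
        simp [hA', huk]
      have hins1 : insert u (S.erase u) = S := insert_erase huS
      have hins2 : insert u A' = A := by
        ext v
        simp only [hA', hA, mem_insert, mem_filter, mem_univ, true_and]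
        constructor
        · rintro (rfl | h)
          · rw [huk]
          · omega
        · intro h
          rcases Nat.lt_or_ge (j.symm v : ℕ) (k : ℕ) with h' | h'
          · exact Or.inr h'
          · left
            have : j.symm v = k := Fin.le_antisymm h h'
            rw [← huk] at this
            exact j.symm.injective this
      -- submodularity: f A - f A' ≤ f S - f (S.erase u)
      have key : f A + f (S.erase u) ≤ f S + f A' := by
        have := hsub S A'
        have hU : S ∪ A' = A := by
          rw [← hins1, ← hins2, insert_union]
          congr 1
          exact union_eq_right.mpr hsubset
        have hI : S ∩ A' = S.erase u := by
          apply le_antisymm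
          · intro v hv
            simp only [mem_inter] at hv
            refine mem_erase.mpr ⟨?_, hv.1⟩
            intro h; exact hunotA' (h ▸ hv.2)
          · intro v hv
            exact mem_inter.mpr ⟨mem_of_mem_erase hv, hsubset hv⟩
        rw [hU, hI] at this
        linarith
      have hZu : Z u = f A - f A' := by rw [hu, hZ k]
      have := ih (S.erase u) (erase_ssubset huS)
      calc ∑ i ∈ S, Z i = Z u + ∑ i ∈ S.erase u, Z i := (add_sum_erase _ _ huS).symm
        _ ≤ (f A - f A') + f (S.erase u) := by linarith [hZu ▸ le_refl (Z u)]
        _ ≤ f S := by linarith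
end

section
/- Let f : 2^M → ℝ be an intersecting submodular function with f(∅) = 0 (i.e., f(S) + f(T) ≥ f(S∪T) + f(S∩T) whenever S ∩ T ≠ ∅). Then the Dilworth truncation g(S) = min over partitions P of S of ∑_{V∈P} f(V) is a submodular function satisfying g(∅) = 0 and P(g,≤) = P(f,≤). -/
open Finset

/-- `P` is a partition of the finite set `S`: a collection of nonempty pairwise disjoint
subsets whose union is `S`. -/
def IsPartitionOf {ι : Type*} [DecidableEq ι] (P : Finset (Finset ι)) (S : Finset ι) : Prop :=
  (∀ V ∈ P, V.Nonempty) ∧ (∀ V ∈ P, ∀ W ∈ P, V ≠ W → Disjoint V W) ∧ P.biUnion id = S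

/-!
Take optimal partitions of `S` and `T`; together they form a family of sets covering `S ∩ T`
twice and the rest of `S ∪ T` once. Replacing two crossing members `V, W` by `V ∪ W, V ∩ W`
keeps the covering numbers, does not increase the sum of `f` (here `V ∩ W ≠ ∅`, so intersecting
submodularity applies) and strictly increases `∑ |V|²`, so repeated uncrossing ends in a laminar
family. The maximal members of that family partition `S ∪ T`; what remains covers every point of
`S ∩ T` exactly once, hence partitions `S ∩ T`. The polyhedra agree because `g ≤ f` on nonempty
sets while `Z(S) = ∑ Z(V)` over any partition of `S`.
-/

section Partitions

variable {ι : Type*} [DecidableEq ι]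

lemma isPartitionOf_iff_exists_finpartition {P : Finset (Finset ι)} {S : Finset ι} :
    IsPartitionOf P S ↔ ∃ Q : Finpartition S, Q.parts = P := by
  constructor
  · rintro ⟨hne, hdisj, hunion⟩
    refine ⟨⟨P, supIndep_iff_pairwiseDisjoint.2 fun V hV W hW => hdisj V hV W hW, ?_, ?_⟩, rfl⟩
    · rw [sup_eq_biUnion, hunion]
    · exact fun h => not_nonempty_empty (hne ∅ h)
  · rintro ⟨Q, rfl⟩
    exact ⟨fun V => Q.nonempty_of_mem_parts, fun V hV W hW => Q.disjoint hV hW, Q.biUnion_parts⟩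

noncomputable def dilworthTruncation (f : Finset ι → ℝ) (S : Finset ι) : ℝ :=
  univ.inf' univ_nonempty fun Q : Finpartition S => ∑ V ∈ Q.parts, f V

variable (f : Finset ι → ℝ)

lemma isLeast_dilworthTruncation (S : Finset ι) :
    IsLeast {x : ℝ | ∃ P : Finset (Finset ι), IsPartitionOf P S ∧ x = ∑ V ∈ P, f V}
      (dilworthTruncation f S) := by
  constructor
  · obtain ⟨Q, -, hQ⟩ := exists_mem_eq_inf' (univ_nonempty (α := Finpartition S))
      fun Q => ∑ V ∈ Q.parts, f V
    exact ⟨Q.parts, isPartitionOf_iff_exists_finpartition.2 ⟨Q, rfl⟩, hQ⟩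
  · rintro x ⟨P, hP, rfl⟩
    obtain ⟨Q, rfl⟩ := isPartitionOf_iff_exists_finpartition.1 hP
    exact inf'_le _ (mem_univ Q)

lemma dilworthTruncation_le_sum {P : Finset (Finset ι)} {S : Finset ι} (hP : IsPartitionOf P S) :
    dilworthTruncation f S ≤ ∑ V ∈ P, f V :=
  (isLeast_dilworthTruncation f S).2 ⟨P, hP, rfl⟩

lemma dilworthTruncation_empty : dilworthTruncation f ∅ = 0 := by
  obtain ⟨P, ⟨hne, -, hunion⟩, hP⟩ := (isLeast_dilworthTruncation f ∅).1
  have : P = ∅ := eq_empty_of_forall_notMem fun V hV =>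
    (hne V hV).ne_empty (subset_empty.1 (hunion ▸ subset_biUnion_of_mem id hV))
  simp [hP, this]

lemma dilworthTruncation_le_self {S : Finset ι} (hS : S.Nonempty) :
    dilworthTruncation f S ≤ f S := by
  simpa using dilworthTruncation_le_sum f (P := {S}) (by simp [IsPartitionOf, hS])

lemma sum_le_dilworthTruncation {Z : ι → ℝ} (hZ : ∀ S : Finset ι, S.Nonempty → ∑ i ∈ S, Z i ≤ f S)
    (S : Finset ι) : ∑ i ∈ S, Z i ≤ dilworthTruncation f S := by
  obtain ⟨P, ⟨hne, hdisj, rfl⟩, hP⟩ := (isLeast_dilworthTruncation f S).1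
  rw [hP, sum_biUnion (t := id) fun V hV W hW => hdisj V hV W hW]
  exact sum_le_sum fun V hV => hZ V (hne V hV)

end Partitions

section Covering

variable {ι : Type*} [DecidableEq ι]

def coverCount (F : Multiset (Finset ι)) (x : ι) : ℕ := F.countP (x ∈ ·)

lemma coverCount_add (F G : Multiset (Finset ι)) (x : ι) :
    coverCount (F + G) x = coverCount F x + coverCount G x :=
  Multiset.countP_add _ _ _

lemma coverCount_union_cons_inter_cons (V W : Finset ι) (F : Multiset (Finset ι)) :
    coverCount ((V ∪ W) ::ₘ (V ∩ W) ::ₘ F) = coverCount (V ::ₘ W ::ₘ F) := by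
  funext x
  simp only [coverCount, Multiset.countP_cons, mem_union, mem_inter]
  by_cases hV : x ∈ V <;> by_cases hW : x ∈ W <;> simp [hV, hW]

lemma mem_biUnion_toFinset_iff_coverCount_pos {F : Multiset (Finset ι)} {x : ι} :
    x ∈ F.toFinset.biUnion id ↔ 0 < coverCount F x := by
  simp [coverCount, Multiset.countP_pos]

lemma isPartitionOf_iff_coverCount {P : Finset (Finset ι)} {A : Finset ι} :
    IsPartitionOf P A ↔
      (∀ V ∈ P, V.Nonempty) ∧ ∀ x, coverCount P.val x = if x ∈ A then 1 else 0 := by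
  have hcard (x : ι) : coverCount P.val x = #{V ∈ P | x ∈ V} := Multiset.countP_eq_card_filter _ _
  have hdisj : (∀ V ∈ P, ∀ W ∈ P, V ≠ W → Disjoint V W) ↔ ∀ x, coverCount P.val x ≤ 1 := by
    simp only [hcard, card_le_one, mem_filter]
    constructor
    · rintro h x V ⟨hV, hxV⟩ W ⟨hW, hxW⟩
      by_contra hVW
      exact disjoint_left.1 (h V hV W hW hVW) hxV hxW
    · exact fun h V hV W hW hVW =>
        disjoint_left.2 fun x hxV hxW => hVW (h x V ⟨hV, hxV⟩ W ⟨hW, hxW⟩)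
  have hunion : P.biUnion id = A ↔ ∀ x, (0 < coverCount P.val x ↔ x ∈ A) := by
    simp only [Finset.ext_iff, ← mem_biUnion_toFinset_iff_coverCount_pos, val_toFinset]
  unfold IsPartitionOf
  rw [hdisj, hunion]
  refine and_congr_right fun _ => ⟨fun ⟨hle, hpos⟩ x => ?_, fun h => ⟨fun x => ?_, fun x => ?_⟩⟩
  · grind [hle x, hpos x]
  · rw [h x]; split_ifs <;> simp
  · rw [h x]; split_ifs <;> simp [*]

lemma exists_isPartitionOf_val_eq {Q : Multiset (Finset ι)} {A : Finset ι}
    (hne : ∀ V ∈ Q, V.Nonempty) (hcov : ∀ x, coverCount Q x = if x ∈ A then 1 else 0) :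
    ∃ P : Finset (Finset ι), P.val = Q ∧ IsPartitionOf P A := by
  have hnodup : Q.Nodup := by
    refine Multiset.nodup_iff_ne_cons_cons.2 fun V R hQ => ?_
    obtain ⟨x, hx⟩ := hne V (by simp [hQ])
    have := hcov x
    simp only [hQ, coverCount, Multiset.countP_cons, hx, if_true] at this
    split_ifs at this; omega
  exact ⟨⟨Q, hnodup⟩, rfl, isPartitionOf_iff_coverCount.2 ⟨hne, hcov⟩⟩

end Covering

section Laminar

variable {ι : Type*} [DecidableEq ι]

def IsLaminar (G : Finset (Finset ι)) : Prop :=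
  ∀ V ∈ G, ∀ W ∈ G, (V ∩ W).Nonempty → V ⊆ W ∨ W ⊆ V

lemma IsLaminar.exists_subset_isPartitionOf {G : Finset (Finset ι)} (hG : IsLaminar G)
    (hne : ∀ V ∈ G, V.Nonempty) : ∃ P ⊆ G, IsPartitionOf P (G.biUnion id) := by
  classical
  refine ⟨{V ∈ G | Maximal (· ∈ G) V}, filter_subset _ _, fun V hV => hne V (mem_filter.1 hV).1,
    fun V hV W hW hVW => ?_, ?_⟩
  · rw [mem_filter] at hV hW
    rw [disjoint_iff_inter_eq_empty, ← not_nonempty_iff_eq_empty]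
    intro hVW'
    rcases hG V hV.1 W hW.1 hVW' with h | h
    · exact hVW (le_antisymm h (hV.2.2 hW.1 h))
    · exact hVW (le_antisymm (hW.2.2 hV.1 h) h)
  · refine (biUnion_subset_biUnion_of_subset_left _ (filter_subset _ _)).antisymm ?_
    intro x hx
    obtain ⟨V, hV, hxV⟩ := mem_biUnion.1 hx
    obtain ⟨W, hVW, hW⟩ := G.exists_le_maximal hV
    exact mem_biUnion.2 ⟨W, mem_filter.2 ⟨hW.1, hW⟩, hVW hxV⟩

end Laminar

section Uncrossing

variable {ι : Type*} [DecidableEq ι]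

lemma sq_card_add_sq_card_lt_of_not_subset {V W : Finset ι} (hVW : ¬V ⊆ W) (hWV : ¬W ⊆ V) :
    #V ^ 2 + #W ^ 2 < #(V ∪ W) ^ 2 + #(V ∩ W) ^ 2 := by
  have hV : #(V ∩ W) < #V :=
    card_lt_card ⟨inter_subset_left, fun h => hVW (h.trans inter_subset_right)⟩
  have hW : #(V ∩ W) < #W :=
    card_lt_card ⟨inter_subset_right, fun h => hWV (h.trans inter_subset_left)⟩
  nlinarith [card_union_add_card_inter V W, Nat.mul_lt_mul'' hV hW]

lemma exists_isLaminar_uncrossing [Fintype ι] {f : Finset ι → ℝ}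
    (hf : ∀ S T : Finset ι, (S ∩ T).Nonempty → f (S ∪ T) + f (S ∩ T) ≤ f S + f T)
    (F : Multiset (Finset ι)) (hne : ∀ V ∈ F, V.Nonempty) :
    ∃ F' : Multiset (Finset ι), (∀ V ∈ F', V.Nonempty) ∧ coverCount F' = coverCount F ∧
      IsLaminar F'.toFinset ∧ (F'.map f).sum ≤ (F.map f).sum := by
  by_cases hlam : IsLaminar F.toFinset
  · exact ⟨F, hne, rfl, hlam, le_rfl⟩
  obtain ⟨V, hV, W, hW, hVW, hnVW, hnWV⟩ :
      ∃ V ∈ F, ∃ W ∈ F, (V ∩ W).Nonempty ∧ ¬V ⊆ W ∧ ¬W ⊆ V := by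
    simpa [IsLaminar] using hlam
  obtain ⟨F₁, rfl⟩ := Multiset.exists_cons_of_mem hV
  obtain ⟨F₀, rfl⟩ := Multiset.exists_cons_of_mem
    ((Multiset.mem_cons.1 hW).resolve_left fun h => hnWV (h ▸ subset_rfl))
  have hneG : ∀ U ∈ (V ∪ W) ::ₘ (V ∩ W) ::ₘ F₀, U.Nonempty := by
    simp only [Multiset.mem_cons]
    rintro U (rfl | rfl | hU)
    · exact (hne V (by simp)).mono subset_union_left
    · exact hVW
    · exact hne U (by simp [hU])
  obtain ⟨F', hneF', hcov, hlam', hsum⟩ :=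
    exists_isLaminar_uncrossing hf ((V ∪ W) ::ₘ (V ∩ W) ::ₘ F₀) hneG
  refine ⟨F', hneF', hcov.trans (coverCount_union_cons_inter_cons V W F₀), hlam', ?_⟩
  have := hf V W hVW
  simp only [Multiset.map_cons, Multiset.sum_cons] at hsum ⊢
  linarith
termination_by (F.map fun V => Fintype.card ι ^ 2 - #V ^ 2).sum
decreasing_by
  subst_vars
  have hsq := sq_card_add_sq_card_lt_of_not_subset hnVW hnWV
  have hle (U : Finset ι) : #U ^ 2 ≤ Fintype.card ι ^ 2 := Nat.pow_le_pow_left (card_le_univ U) 2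
  have := hle V; have := hle W; have := hle (V ∪ W); have := hle (V ∩ W)
  simp only [Multiset.map_cons, Multiset.sum_cons]
  omega

end Uncrossing

section Submodularity

variable {ι : Type*} [DecidableEq ι] {f : Finset ι → ℝ}

lemma dilworthTruncation_union_add_inter_le_of_isLaminar {F : Multiset (Finset ι)}
    {S T : Finset ι} (hne : ∀ V ∈ F, V.Nonempty) (hlam : IsLaminar F.toFinset)
    (hcov : ∀ x, coverCount F x = (if x ∈ S then 1 else 0) + if x ∈ T then 1 else 0) :
    dilworthTruncation f (S ∪ T) + dilworthTruncation f (S ∩ T) ≤ (F.map f).sum := by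
  obtain ⟨P, hPF, hP⟩ := hlam.exists_subset_isPartitionOf (by simpa using hne)
  have hunion : F.toFinset.biUnion id = S ∪ T := by
    ext x
    rw [mem_biUnion_toFinset_iff_coverCount_pos, hcov, mem_union]
    split_ifs <;> simp_all
  rw [hunion] at hP
  have hPle : P.val ≤ F := (Multiset.le_iff_subset P.nodup).2 fun V hV => by simpa using hPF hV
  obtain ⟨Q, hQF, hQ⟩ : ∃ Q : Finset (Finset ι), Q.val = F - P.val ∧ IsPartitionOf Q (S ∩ T) := by
    refine exists_isPartitionOf_val_eq (fun V hV => hne V (Multiset.mem_of_le tsub_le_self hV))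
      fun x => ?_
    have hsplit := coverCount_add P.val (F - P.val) x
    rw [add_tsub_cancel_of_le hPle, hcov, (isPartitionOf_iff_coverCount.1 hP).2 x] at hsplit
    by_cases hS : x ∈ S <;> by_cases hT : x ∈ T <;> simp [hS, hT] at hsplit ⊢ <;> omega
  calc dilworthTruncation f (S ∪ T) + dilworthTruncation f (S ∩ T)
      ≤ ∑ V ∈ P, f V + ∑ V ∈ Q, f V :=
        add_le_add (dilworthTruncation_le_sum f hP) (dilworthTruncation_le_sum f hQ)
    _ = (F.map f).sum := by
        rw [← add_tsub_cancel_of_le hPle, Multiset.map_add, Multiset.sum_add, ← hQF]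
        rfl

lemma dilworthTruncation_union_add_inter_le [Fintype ι]
    (hf : ∀ S T : Finset ι, (S ∩ T).Nonempty → f (S ∪ T) + f (S ∩ T) ≤ f S + f T)
    (S T : Finset ι) :
    dilworthTruncation f (S ∪ T) + dilworthTruncation f (S ∩ T) ≤
      dilworthTruncation f S + dilworthTruncation f T := by
  obtain ⟨P, hP, hPS⟩ := (isLeast_dilworthTruncation f S).1
  obtain ⟨Q, hQ, hQT⟩ := (isLeast_dilworthTruncation f T).1
  obtain ⟨F, hne, hcov, hlam, hsum⟩ := exists_isLaminar_uncrossing hf (P.val + Q.val) fun V hV =>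
    (Multiset.mem_add.1 hV).elim (hP.1 V) (hQ.1 V)
  calc dilworthTruncation f (S ∪ T) + dilworthTruncation f (S ∩ T) ≤ (F.map f).sum :=
        dilworthTruncation_union_add_inter_le_of_isLaminar hne hlam fun x => by
          rw [hcov, coverCount_add, (isPartitionOf_iff_coverCount.1 hP).2,
            (isPartitionOf_iff_coverCount.1 hQ).2]
    _ ≤ ((P.val + Q.val).map f).sum := hsum
    _ = dilworthTruncation f S + dilworthTruncation f T := by
        rw [hPS, hQT, Multiset.map_add, Multiset.sum_add]
        rfl

end Submodularity

theorem dilworth_truncation_general {ι : Type*} [Fintype ι] [DecidableEq ι]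
    (f : Finset ι → ℝ)
    (hint : ∀ S T : Finset ι, (S ∩ T).Nonempty → f (S ∪ T) + f (S ∩ T) ≤ f S + f T) :
    ∃ g : Finset ι → ℝ,
      (∀ S T : Finset ι, g (S ∪ T) + g (S ∩ T) ≤ g S + g T) ∧
      g ∅ = 0 ∧
      (∀ S : Finset ι,
        IsLeast {x : ℝ | ∃ P : Finset (Finset ι), IsPartitionOf P S ∧ x = ∑ V ∈ P, f V}
          (g S)) ∧
      {Z : ι → ℝ | ∀ S : Finset ι, S.Nonempty → ∑ i ∈ S, Z i ≤ g S}
        = {Z : ι → ℝ | ∀ S : Finset ι, S.Nonempty → ∑ i ∈ S, Z i ≤ f S} := by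
  refine ⟨dilworthTruncation f, dilworthTruncation_union_add_inter_le hint,
    dilworthTruncation_empty f, isLeast_dilworthTruncation f, Set.ext fun Z => ⟨?_, ?_⟩⟩
  · exact fun hZ S hS => (hZ S hS).trans (dilworthTruncation_le_self f hS)
  · exact fun hZ S _ => sum_le_dilworthTruncation f hZ S

/-- Dilworth truncation: for an intersecting submodular `f` with `f ∅ = 0`,
the Dilworth truncation `g(S) = min over partitions P of S of ∑_{V ∈ P} f V` is a
submodular function with `g ∅ = 0` and `P(g,≤) = P(f,≤)`. -/
theorem dilworth_truncation {ι : Type*} [Fintype ι] [DecidableEq ι]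
    (f : Finset ι → ℝ) (hf0 : f ∅ = 0)
    (hint : ∀ S T : Finset ι, (S ∩ T).Nonempty → f (S ∪ T) + f (S ∩ T) ≤ f S + f T) :
    ∃ g : Finset ι → ℝ,
      (∀ S T : Finset ι, g (S ∪ T) + g (S ∩ T) ≤ g S + g T) ∧
      g ∅ = 0 ∧
      (∀ S : Finset ι,
        IsLeast {x : ℝ | ∃ P : Finset (Finset ι), IsPartitionOf P S ∧ x = ∑ V ∈ P, f V}
          (g S)) ∧
      {Z : ι → ℝ | ∀ S : Finset ι, S.Nonempty → ∑ i ∈ S, Z i ≤ g S}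
        = {Z : ι → ℝ | ∀ S : Finset ι, S.Nonempty → ∑ i ∈ S, Z i ≤ f S} :=
  dilworth_truncation_general f hint
end

section
/- Let X_1,…,X_m be jointly distributed discrete random variables with joint entropy function H, and for β ∈ ℝ define the set function f(S,β) = β − H(X_{Sᶜ} | X_S) for nonempty S ⊆ M = {1,…,m} and f(∅,β) = 0. Then f(·,β) is intersecting submodular for every β, and if β ≥ H(X_M) then f(·,β) is (fully) submodular. -/
open Finset

/-- with `H` the (joint) entropy function of discrete random variables
`X_1, …, X_m` (so `H ∅ = 0` and `H` is submodular), the set function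
`f(S,β) = β − H(X_{Sᶜ}|X_S) = β − (H(M) − H(S))` for nonempty `S` (and `f(∅,β)=0`)
is intersecting submodular for every `β`, and is fully submodular whenever `β ≥ H(M)`. -/
theorem f_beta_intersecting_submodular {m : ℕ}
    (H : Finset (Fin m) → ℝ) (hH0 : H ∅ = 0)
    (hHsub : ∀ S T : Finset (Fin m), H (S ∪ T) + H (S ∩ T) ≤ H S + H T)
    (f : ℝ → Finset (Fin m) → ℝ)
    (hf : ∀ β (S : Finset (Fin m)),
      f β S = if S = ∅ then 0 else β - (H Finset.univ - H S)) :
    (∀ β : ℝ, ∀ S T : Finset (Fin m), (S ∩ T).Nonempty →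
        f β (S ∪ T) + f β (S ∩ T) ≤ f β S + f β T) ∧
    (∀ β : ℝ, H Finset.univ ≤ β → ∀ S T : Finset (Fin m),
        f β (S ∪ T) + f β (S ∩ T) ≤ f β S + f β T) := by
  constructor
  · intro β S T hST
    have hSTne := hST.ne_empty
    have hS : S ≠ ∅ := fun h => by simp [h] at hSTne
    have hT : T ≠ ∅ := fun h => by simp [h] at hSTne
    have hU : S ∪ T ≠ ∅ := fun h => hS (by
      exact subset_empty.mp (h ▸ subset_union_left))
    rw [hf, hf, hf, hf, if_neg hS, if_neg hT, if_neg hU, if_neg hSTne]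
    have := hHsub S T
    linarith
  · intro β hβ S T
    by_cases hS : S = ∅
    · subst hS; simp [hf]
    by_cases hT : T = ∅
    · subst hT; simp [hf]
    have hU : S ∪ T ≠ ∅ := fun h => hS (by
      exact subset_empty.mp (h ▸ subset_union_left))
    by_cases hI : S ∩ T = ∅
    · rw [hf, hf, hf, hf, if_neg hS, if_neg hT, if_neg hU, if_pos hI]
      have h2 := hHsub S T
      rw [hI, hH0] at h2
      linarith
    · rw [hf, hf, hf, hf, if_neg hS, if_neg hT, if_neg hU, if_neg hI]
      have := hHsub S T
      linarith
end

section
/- With f(S,β) = β − H(X_{Sᶜ}|X_S) as above, the minimum sum-rate for communication for omniscience R_CO = min{ ∑_i R_i : R(S) ≥ H(X_S|X_{Sᶜ}) ∀S ⊊ M } equals the minimum β ∈ ℝ such that β is the optimal value of max{ ∑_i Z_i : Z ∈ P(f(·,β),≤) }; that is, if for some β' a maximizer Z of ∑ Z_i over P(f(·,β'),≤) satisfies Z(M) = β', then β' ≥ R_CO, and β = R_CO is itself such a value. -/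
open Finset

lemma aux_compl_nonempty {m : ℕ} {S : Finset (Fin m)} (h : S ≠ Finset.univ) :
    Sᶜ.Nonempty := by
  rw [Finset.nonempty_iff_ne_empty]
  intro he
  exact h (by simpa using congrArg (·ᶜ) he)

lemma aux_compl_ne_univ {m : ℕ} {S : Finset (Fin m)} (h : S.Nonempty) :
    Sᶜ ≠ Finset.univ := by
  intro he
  have : S = ∅ := by simpa using congrArg (·ᶜ) he
  exact h.ne_empty this

/-- the minimum sum-rate for communication for omniscience `R_CO` (the least
value of `∑ R i` over the cut-set region `R(S) ≥ H(X_S|X_{Sᶜ}) = H(M) − H(Sᶜ)` for all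
proper nonempty `S`) equals the least `β` such that `β` is the optimal value of
`max ∑ Z i` over the polyhedron `P(f(·,β),≤)` with `f(S,β) = β − (H(M) − H(S))`. -/
theorem rco_eq_min_beta {m : ℕ} (hm : 2 ≤ m)
    (H : Finset (Fin m) → ℝ) (hH0 : H ∅ = 0)
    (hHmono : ∀ S T : Finset (Fin m), S ⊆ T → H S ≤ H T)
    (hHsub : ∀ S T : Finset (Fin m), H (S ∪ T) + H (S ∩ T) ≤ H S + H T)
    (Rco : ℝ)
    (hRco : IsLeast {x : ℝ | ∃ R : Fin m → ℝ,
        (∀ S : Finset (Fin m), S.Nonempty → S ≠ Finset.univ →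
          H Finset.univ - H Sᶜ ≤ ∑ i ∈ S, R i) ∧
        x = ∑ i, R i} Rco) :
    IsLeast {β : ℝ | IsGreatest {x : ℝ | ∃ Z : Fin m → ℝ,
        (∀ S : Finset (Fin m), S.Nonempty →
          ∑ i ∈ S, Z i ≤ β - (H Finset.univ - H S)) ∧
        x = ∑ i, Z i} β} Rco := by
  have hn : (0 : ℕ) < m := by omega
  haveI : NeZero m := ⟨by omega⟩
  have huniv : (Finset.univ : Finset (Fin m)).Nonempty := univ_nonempty
  constructor
  · -- Rco belongs to the set: IsGreatest at β = Rco
    obtain ⟨R, hRfeas, hRsum⟩ := hRco.1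
    constructor
    · -- Rco is attained: use Z = R
      refine ⟨R, ?_, hRsum⟩
      intro S hS
      by_cases hSu : S = Finset.univ
      · subst hSu; simp [← hRsum]
      · have hScne : Sᶜ.Nonempty := aux_compl_nonempty hSu
        have hScu : Sᶜ ≠ Finset.univ := aux_compl_ne_univ hS
        have := hRfeas Sᶜ hScne hScu
        rw [compl_compl] at this
        have hsplit : ∑ i ∈ S, R i + ∑ i ∈ Sᶜ, R i = ∑ i, R i :=
          Finset.sum_add_sum_compl S R
        have : Rco - (H Finset.univ - H S) ≥ ∑ i ∈ S, R i := by
          rw [hRsum, ← hsplit]; linarith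
        linarith
    · -- Rco is an upper bound: use constraint at S = univ
      rintro x ⟨Z, hZfeas, rfl⟩
      have := hZfeas Finset.univ huniv
      simpa using this
  · -- lower bound: any β in the set satisfies Rco ≤ β
    rintro β ⟨⟨Z, hZfeas, hZsum⟩, -⟩
    have hZuniv : ∑ i, Z i = β := by
      have h1 := hZfeas Finset.univ huniv
      simp only [sub_self, sub_zero] at h1
      linarith [hZsum ▸ (le_refl β)]
    apply hRco.2
    refine ⟨Z, ?_, hZuniv.symm⟩
    intro S hS hSu
    have hScne : Sᶜ.Nonempty := aux_compl_nonempty hSu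
    have := hZfeas Sᶜ hScne
    have hsplit : ∑ i ∈ S, Z i + ∑ i ∈ Sᶜ, Z i = ∑ i, Z i :=
      Finset.sum_add_sum_compl S Z
    linarith
end

section
/- Define g(M,β) = min over partitions P of M (of any size) of ∑_{S∈P} (β − H(X_{Sᶜ}|X_S)). Then g(M,·) is a piecewise-linear concave function of β with at most m linear segments, its slope as a function of β is non-increasing, and for β ≥ H(X_M) its slope equals 1 (i.e., g(M,β) = β for all β ≥ H(X_M)). -/
/-!
Each partition `P` of `M` contributes the affine function `β ↦ |P| β + c(P)`, so `g` is the
minimum of finitely many affine functions with slopes in `{1, …, m}`; such a minimum is concave.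
For `β ≥ H(X_M)` every line lies above `β`, because `|P| ≥ 1` and subadditivity of `H` over the
blocks gives `c(P) ≥ -(|P| - 1) H(X_M)`; the one-block partition attains `β`.
-/

open Finset

namespace IsPartitionOf

variable {ι : Type*} [DecidableEq ι] {P : Finset (Finset ι)} {S : Finset ι}

lemma singleton (hS : S.Nonempty) : IsPartitionOf {S} S := by
  refine ⟨?_, ?_, ?_⟩ <;> simp [hS]

lemma pairwiseDisjoint (hP : IsPartitionOf P S) : (P : Set (Finset ι)).PairwiseDisjoint id :=
  fun V hV W hW hVW => hP.2.1 V hV W hW hVW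

lemma nonempty (hP : IsPartitionOf P S) (hS : S.Nonempty) : P.Nonempty := by
  rw [← hP.2.2] at hS
  obtain ⟨_, hx⟩ := hS
  obtain ⟨V, hV, -⟩ := mem_biUnion.1 hx
  exact ⟨V, hV⟩

lemma card_le (hP : IsPartitionOf P S) : #P ≤ #S :=
  calc #P = ∑ _V ∈ P, 1 := card_eq_sum_ones P
    _ ≤ ∑ V ∈ P, #V := sum_le_sum fun V hV => card_pos.2 (hP.1 V hV)
    _ = #S := by rw [← hP.2.2, card_biUnion hP.pairwiseDisjoint]; rfl

end IsPartitionOf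

lemma apply_biUnion_le_sum_of_subadditive {ι M : Type*} [DecidableEq ι] [AddCommMonoid M]
    [PartialOrder M] [IsOrderedAddMonoid M] {H : Finset ι → M} (hH0 : H ∅ = 0)
    (hH : ∀ S T, Disjoint S T → H (S ∪ T) ≤ H S + H T) {P : Finset (Finset ι)}
    (hP : (P : Set (Finset ι)).PairwiseDisjoint id) :
    H (P.biUnion id) ≤ ∑ S ∈ P, H S := by
  induction P using Finset.induction with
  | empty => simp [hH0]
  | insert V P hV ih =>
    rw [biUnion_insert, sum_insert hV]
    have hdisj : Disjoint V (P.biUnion id) :=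
      (disjoint_biUnion_right _ _ _).2 fun W hW =>
        hP (mem_insert_self V P) (mem_insert_of_mem hW) (ne_of_mem_of_not_mem hW hV).symm
    exact (hH _ _ hdisj).trans
      (add_le_add_right (ih (hP.subset (coe_subset.2 (subset_insert V P)))) _)

lemma sum_sub_sub_eq_card_mul_add {α : Type*} (P : Finset α) (h : α → ℝ) (β t : ℝ) :
    ∑ S ∈ P, (β - (t - h S)) = #P * β + (∑ S ∈ P, h S - #P * t) := by
  simp only [sum_sub_distrib, sum_const, nsmul_eq_mul]
  ring

section MinOfAffine

variable {ι : Type*} {g : ℝ → ℝ}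

lemma concaveOn_of_isLeast_affine (s : Set ι) (a b : ι → ℝ)
    (hg : ∀ β, IsLeast {x | ∃ i ∈ s, x = a i * β + b i} (g β)) :
    ConcaveOn ℝ Set.univ g := by
  refine ⟨convex_univ, fun x _ y _ μ ν hμ hν hμν => ?_⟩
  obtain ⟨i, hi, hgi⟩ := (hg (μ • x + ν • y)).1
  have hx := (hg x).2 ⟨i, hi, rfl⟩
  have hy := (hg y).2 ⟨i, hi, rfl⟩
  rw [hgi, smul_eq_mul, smul_eq_mul, smul_eq_mul, smul_eq_mul]
  calc μ * g x + ν * g y ≤ μ * (a i * x + b i) + ν * (a i * y + b i) := by gcongr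
    _ = a i * (μ * x + ν * y) + b i := by linear_combination b i * hμν

/-- Lines of equal slope are merged by keeping the lowest one. -/
lemma exists_isLeast_affine_of_slopes (s : Finset ι) (a : ι → ℕ) (b : ι → ℝ)
    (hg : ∀ β, IsLeast {x | ∃ i ∈ s, x = a i * β + b i} (g β)) :
    ∃ c : ℕ → ℝ, ∀ β, IsLeast {x | ∃ k ∈ s.image a, x = k * β + c k} (g β) := by
  classical
  let c k := sInf (((s.filter (a · = k)).image b : Finset ℝ) : Set ℝ)
  have hc_le : ∀ i ∈ s, c (a i) ≤ b i := fun i hi =>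
    csInf_le (Finset.bddBelow _) (mem_coe.2 (mem_image_of_mem b (mem_filter.2 ⟨hi, rfl⟩)))
  have hc_mem : ∀ k ∈ s.image a, ∃ j ∈ s, a j = k ∧ b j = c k := by
    intro k hk
    obtain ⟨i, hi, rfl⟩ := mem_image.1 hk
    have hne : ((s.filter (a · = a i)).image b).Nonempty :=
      ⟨b i, mem_image_of_mem b (mem_filter.2 ⟨hi, rfl⟩)⟩
    obtain ⟨j, hj, hbj⟩ := mem_image.1 hne.csInf_mem
    exact ⟨j, (mem_filter.1 hj).1, (mem_filter.1 hj).2, hbj⟩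
  have hlower : ∀ β, ∀ k ∈ s.image a, g β ≤ k * β + c k := by
    intro β k hk
    obtain ⟨j, hj, rfl, hbj⟩ := hc_mem k hk
    exact hbj ▸ (hg β).2 ⟨j, hj, rfl⟩
  refine ⟨c, fun β => ⟨?_, ?_⟩⟩
  · obtain ⟨i, hi, hgi⟩ := (hg β).1
    refine ⟨a i, mem_image_of_mem a hi, le_antisymm (hlower β _ (mem_image_of_mem a hi)) ?_⟩
    rw [hgi]
    gcongr
    exact hc_le i hi
  · rintro x ⟨k, hk, rfl⟩
    exact hlower β k hk

end MinOfAffine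

theorem dilworth_value_piecewise_linear_concave_general {m : ℕ} (hm : 1 ≤ m)
    (H : Finset (Fin m) → ℝ) (hH0 : H ∅ = 0)
    (hHsub : ∀ S T : Finset (Fin m), H (S ∪ T) + H (S ∩ T) ≤ H S + H T)
    (g : ℝ → ℝ)
    (hg : ∀ β : ℝ, IsLeast {x : ℝ | ∃ P : Finset (Finset (Fin m)),
        IsPartitionOf P Finset.univ ∧
        x = ∑ S ∈ P, (β - (H Finset.univ - H S))} (g β)) :
    (∃ K : Finset ℕ, K.Nonempty ∧ K ⊆ Finset.Icc 1 m ∧ ∃ c : ℕ → ℝ,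
        ∀ β : ℝ, IsLeast {x : ℝ | ∃ k ∈ K, x = (k : ℝ) * β + c k} (g β)) ∧
    ConcaveOn ℝ Set.univ g ∧
    (∀ β : ℝ, H Finset.univ ≤ β → g β = β) := by
  classical
  have huniv : (univ : Finset (Fin m)).Nonempty := ⟨⟨0, hm⟩, mem_univ _⟩
  let s := univ.filter fun P : Finset (Finset (Fin m)) => IsPartitionOf P univ
  let b P := ∑ S ∈ P, H S - #P * H univ
  have hg' : ∀ β, IsLeast {x | ∃ P ∈ s, x = (#P : ℝ) * β + b P} (g β) := by
    simpa only [s, b, mem_filter, mem_univ, true_and, sum_sub_sub_eq_card_mul_add] using hg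
  have hsingleton : {univ} ∈ s := mem_filter.2 ⟨mem_univ _, .singleton huniv⟩
  refine ⟨⟨s.image card, ⟨1, mem_image.2 ⟨_, hsingleton, card_singleton _⟩⟩, ?_,
    exists_isLeast_affine_of_slopes s card b hg'⟩, concaveOn_of_isLeast_affine s _ b hg',
    fun β hβ => le_antisymm ((hg' β).2 ⟨_, hsingleton, by simp [b]⟩) ?_⟩
  · intro k hk
    obtain ⟨P, hPs, rfl⟩ := mem_image.1 hk
    have hP := (mem_filter.1 hPs).2
    exact mem_Icc.2 ⟨card_pos.2 (hP.nonempty huniv), hP.card_le.trans_eq (card_fin m)⟩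
  · obtain ⟨P, hPs, hgP⟩ := (hg' β).1
    have hP := (mem_filter.1 hPs).2
    have hcard : (1 : ℝ) ≤ #P := by exact_mod_cast card_pos.2 (hP.nonempty huniv)
    have hH : H univ ≤ ∑ S ∈ P, H S := hP.2.2 ▸ apply_biUnion_le_sum_of_subadditive hH0
      (fun S T hST => by simpa [disjoint_iff_inter_eq_empty.1 hST, hH0] using hHsub S T)
      hP.pairwiseDisjoint
    rw [hgP]
    nlinarith [mul_le_mul_of_nonneg_right hcard (sub_nonneg.2 hβ)]

/-- `g(M,β) = min over partitions P of M of ∑_{S∈P} (β − H(X_{Sᶜ}|X_S))`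
is a piecewise-linear concave function of `β`: it is a minimum of at most `m` affine
functions with slopes `k ∈ {1,…,m}` (the partition sizes), it is concave, and for
`β ≥ H(X_M)` it equals `β` (slope 1 on the last segment). -/
theorem dilworth_value_piecewise_linear_concave {m : ℕ} (hm : 1 ≤ m)
    (H : Finset (Fin m) → ℝ) (hH0 : H ∅ = 0)
    (hHmono : ∀ S T : Finset (Fin m), S ⊆ T → H S ≤ H T)
    (hHsub : ∀ S T : Finset (Fin m), H (S ∪ T) + H (S ∩ T) ≤ H S + H T)
    (g : ℝ → ℝ)
    (hg : ∀ β : ℝ, IsLeast {x : ℝ | ∃ P : Finset (Finset (Fin m)),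
        IsPartitionOf P Finset.univ ∧
        x = ∑ S ∈ P, (β - (H Finset.univ - H S))} (g β)) :
    (∃ K : Finset ℕ, K.Nonempty ∧ K ⊆ Finset.Icc 1 m ∧ ∃ c : ℕ → ℝ,
        ∀ β : ℝ, IsLeast {x : ℝ | ∃ k ∈ K, x = (k : ℝ) * β + c k} (g β)) ∧
    ConcaveOn ℝ Set.univ g ∧
    (∀ β : ℝ, H Finset.univ ≤ β → g β = β) :=
  dilworth_value_piecewise_linear_concave_general hm H hH0 hHsub g hg
end

section
/- The minimum sum-rate for omniscience satisfies R_CO = H(X_M) − min_P ( (∑_{S∈P} H(X_S) − H(X_M)) / (|P| − 1) ), where the minimum is over all partitions P of M with |P| ≥ 2. -/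
open Finset

/-!
Put `g S = H S - μ`. A vector `R` with `R(M) = H M - μ` is feasible iff `R(T) ≤ g T` for every
nonempty proper `T` (write `T = Sᶜ`). Choosing the coordinates one at a time, each as large as the
constraints already in force allow, gives `R ≤ g` on nonempty sets with every element lying in a
tight set `R(T) = g T`. By submodularity two intersecting tight sets have a tight union, so the
maximal tight sets partition `M`, whence `R(M) = ∑_{S ∈ P} g S ≥ H M - μ` by the definition of `μ`;
as also `R(M) ≤ g M`, this `R` is feasible with sum `H M - μ`. Conversely, summing the constraints
of any feasible vector over the blocks of a minimising partition gives `R(M) ≥ H M - μ`.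
-/
namespace IsPartitionOf

variable {ι : Type*} [DecidableEq ι] {P : Finset (Finset ι)} {s : Finset ι}

theorem sum_sum {β : Type*} [AddCommMonoid β] (hP : IsPartitionOf P s) (f : ι → β) :
    ∑ S ∈ P, ∑ i ∈ S, f i = ∑ i ∈ s, f i := by
  rw [← hP.2.2, sum_biUnion (t := id) fun V hV W hW h => hP.2.1 V hV W hW h]
  rfl

theorem eq_singleton_of_card_lt_two (hP : IsPartitionOf P s) (hs : s.Nonempty)
    (hcard : P.card < 2) : P = {s} := by
  obtain h | h : P.card = 0 ∨ P.card = 1 := by omega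
  · rw [card_eq_zero.1 h] at hP
    simp [← hP.2.2] at hs
  · obtain ⟨S, rfl⟩ := card_eq_one.1 h
    simpa using hP.2.2

theorem ne_of_two_le_card (hP : IsPartitionOf P s) (hcard : 2 ≤ P.card) {S : Finset ι}
    (hS : S ∈ P) : S ≠ s := by
  obtain ⟨T, hT, hTS⟩ := exists_mem_ne hcard S
  obtain ⟨i, hi⟩ := hP.1 T hT
  rintro rfl
  have hiS : i ∈ S := hP.2.2 ▸ mem_biUnion.2 ⟨T, hT, hi⟩
  exact disjoint_left.1 (hP.2.1 T hT S hS hTS) hi hiS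

end IsPartitionOf

section

variable {α : Type*} [DecidableEq α]

theorem exists_sum_le_and_forall_mem_tight (g : Finset α → ℝ) (s : Finset α) :
    ∃ R : α → ℝ, (∀ T ⊆ s, T.Nonempty → ∑ i ∈ T, R i ≤ g T) ∧
      ∀ i ∈ s, ∃ T ⊆ s, i ∈ T ∧ ∑ j ∈ T, R j = g T := by
  induction s using Finset.induction_on with
  | empty => exact ⟨0, fun T hT hne => absurd (subset_empty.1 hT) hne.ne_empty, by simp⟩
  | insert a s ha ih =>
    obtain ⟨R, hle, htight⟩ := ih
    obtain ⟨U, hUs, hU⟩ := s.powerset.exists_min_image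
      (fun U => g (insert a U) - ∑ j ∈ U, R j) ⟨∅, empty_mem_powerset s⟩
    rw [mem_powerset] at hUs
    have haU : a ∉ U := fun h => ha (hUs h)
    refine ⟨Function.update R a (g (insert a U) - ∑ j ∈ U, R j), fun T hT hne => ?_,
      fun i hi => ?_⟩
    · by_cases haT : a ∈ T
      · have hTa : T.erase a ⊆ s := fun j hj =>
          (mem_insert.1 (hT (mem_of_mem_erase hj))).resolve_left (ne_of_mem_erase hj)
        have hmin := hU (T.erase a) (mem_powerset.2 hTa)
        rw [insert_erase haT] at hmin
        rw [sum_update_of_mem haT, sdiff_singleton_eq_erase]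
        linarith
      · rw [sum_update_of_notMem haT]
        exact hle T ((subset_insert_iff_of_notMem haT).1 hT) hne
    · rcases mem_insert.1 hi with rfl | hi
      · refine ⟨insert i U, insert_subset_insert i hUs, mem_insert_self i U, ?_⟩
        rw [sum_update_of_mem (mem_insert_self i U), sdiff_singleton_eq_erase, erase_insert haU]
        ring
      · obtain ⟨T, hTs, hiT, hT⟩ := htight i hi
        refine ⟨T, hTs.trans (subset_insert a s), hiT, ?_⟩
        rwa [sum_update_of_notMem fun h => ha (hTs h)]

theorem sum_union_eq_of_tight {g : Finset α → ℝ}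
    (hg : ∀ A B : Finset α, (A ∩ B).Nonempty → g (A ∪ B) + g (A ∩ B) ≤ g A + g B)
    {R : α → ℝ} (hR : ∀ T : Finset α, T.Nonempty → ∑ i ∈ T, R i ≤ g T) {A B : Finset α}
    (hA : ∑ i ∈ A, R i = g A) (hB : ∑ i ∈ B, R i = g B) (hAB : (A ∩ B).Nonempty) :
    ∑ i ∈ A ∪ B, R i = g (A ∪ B) := by
  have hunion := hR (A ∪ B) (hAB.mono inter_subset_union)
  have hinter := hR (A ∩ B) hAB
  have := sum_union_inter (s₁ := A) (s₂ := B) (f := R)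
  linarith [hg A B hAB]

variable [Fintype α]

theorem exists_isPartitionOf_univ_of_union_closed (p : Finset α → Prop)
    (hunion : ∀ A B : Finset α, p A → p B → (A ∩ B).Nonempty → p (A ∪ B))
    (hcover : ∀ i, ∃ T, p T ∧ i ∈ T) :
    ∃ P : Finset (Finset α), IsPartitionOf P univ ∧ ∀ S ∈ P, p S := by
  classical
  have hmax : ∀ i, ∃ T, (p T ∧ i ∈ T) ∧ ∀ T', p T' → i ∈ T' → T'.card ≤ T.card := by
    intro i
    obtain ⟨T, hT, hTmax⟩ := (univ.filter fun T => p T ∧ i ∈ T).exists_max_image card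
      (let ⟨T, hT⟩ := hcover i; ⟨T, by simpa using hT⟩)
    exact ⟨T, (mem_filter.1 hT).2, fun T' hT' hiT' => hTmax T' (by simp [hT', hiT'])⟩
  choose M hM hMmax using hmax
  have hsub : ∀ i j, (M i ∩ M j).Nonempty → M j ⊆ M i := fun i j h =>
    union_eq_left.1 (eq_of_subset_of_card_le subset_union_left
      (hMmax i _ (hunion _ _ (hM i).1 (hM j).1 h) (mem_union_left _ (hM i).2))).symm
  refine ⟨univ.image M, ⟨?_, ?_, ?_⟩, ?_⟩
  · simp only [mem_image, mem_univ, true_and, forall_exists_index, forall_apply_eq_imp_iff]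
    exact fun i => ⟨i, (hM i).2⟩
  · simp only [mem_image, mem_univ, true_and, forall_exists_index, forall_apply_eq_imp_iff]
    intro i j hij
    rw [disjoint_iff_inter_eq_empty, ← not_nonempty_iff_eq_empty]
    exact fun h => hij (subset_antisymm (hsub j i (inter_comm (M i) (M j) ▸ h)) (hsub i j h))
  · exact eq_univ_of_forall fun i =>
      mem_biUnion.2 ⟨M i, mem_image_of_mem M (mem_univ i), (hM i).2⟩
  · simp only [mem_image, mem_univ, true_and, forall_exists_index, forall_apply_eq_imp_iff]
    exact fun i => (hM i).1

theorem exists_sum_le_and_sum_eq_partition (g : Finset α → ℝ)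
    (hg : ∀ A B : Finset α, (A ∩ B).Nonempty → g (A ∪ B) + g (A ∩ B) ≤ g A + g B) :
    ∃ R : α → ℝ, (∀ T : Finset α, T.Nonempty → ∑ i ∈ T, R i ≤ g T) ∧
      ∃ P, IsPartitionOf P univ ∧ ∑ i, R i = ∑ S ∈ P, g S := by
  obtain ⟨R, hle, htight⟩ := exists_sum_le_and_forall_mem_tight g univ
  have hle' : ∀ T : Finset α, T.Nonempty → ∑ i ∈ T, R i ≤ g T :=
    fun T => hle T (subset_univ T)
  obtain ⟨P, hP, hPtight⟩ := exists_isPartitionOf_univ_of_union_closed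
    (fun T => ∑ i ∈ T, R i = g T) (fun _ _ hA hB hAB => sum_union_eq_of_tight hg hle' hA hB hAB)
    (fun i => by
      obtain ⟨T, -, hiT, hT⟩ := htight i (mem_univ i)
      exact ⟨T, hT, hiT⟩)
  exact ⟨R, hle', P, hP, by rw [← hP.sum_sum, sum_congr rfl hPtight]⟩

theorem card_sub_one_mul_le_of_feasible (H : Finset α → ℝ) {R : α → ℝ}
    (hR : ∀ S : Finset α, S.Nonempty → S ≠ univ → H univ - H Sᶜ ≤ ∑ i ∈ S, R i)
    {P : Finset (Finset α)} (hP : IsPartitionOf P univ) (hcard : 2 ≤ P.card) :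
    ((P.card : ℝ) - 1) * (H univ - ∑ i, R i) ≤ (∑ S ∈ P, H S) - H univ := by
  have hblock : ∀ S ∈ P, H univ - H S ≤ ∑ i, R i - ∑ i ∈ S, R i := by
    intro S hS
    have hSc := hR Sᶜ ((compl_ne_univ_iff_nonempty Sᶜ).1
      (by rw [compl_compl]; exact hP.ne_of_two_le_card hcard hS))
      ((compl_ne_univ_iff_nonempty S).2 (hP.1 S hS))
    rw [compl_compl] at hSc
    linarith [sum_add_sum_compl S R]
  have hsum := sum_le_sum hblock
  rw [sum_sub_distrib, sum_sub_distrib, hP.sum_sum, sum_const, sum_const, nsmul_eq_mul,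
    nsmul_eq_mul] at hsum
  linarith

theorem sub_le_sum_sub_of_isPartitionOf (H : Finset α → ℝ) {μ : ℝ}
    (hμ : ∀ P : Finset (Finset α), IsPartitionOf P univ → 2 ≤ P.card →
      μ ≤ ((∑ S ∈ P, H S) - H univ) / ((P.card : ℝ) - 1))
    (hne : (univ : Finset α).Nonempty) {P : Finset (Finset α)} (hP : IsPartitionOf P univ) :
    H univ - μ ≤ ∑ S ∈ P, (H S - μ) := by
  by_cases hcard : 2 ≤ P.card
  · have hk : (0 : ℝ) < P.card - 1 := by
      have : (2 : ℝ) ≤ P.card := by exact_mod_cast hcard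
      linarith
    have := (le_div_iff₀ hk).1 (hμ P hP hcard)
    rw [sum_sub_distrib, sum_const, nsmul_eq_mul]
    linarith
  · simp [hP.eq_singleton_of_card_lt_two hne (by omega)]

end

theorem rco_partition_formula_general {m : ℕ}
    (H : Finset (Fin m) → ℝ)
    (hHsub : ∀ S T : Finset (Fin m), H (S ∪ T) + H (S ∩ T) ≤ H S + H T)
    (Rco : ℝ)
    (hRco : IsLeast {x : ℝ | ∃ R : Fin m → ℝ,
        (∀ S : Finset (Fin m), S.Nonempty → S ≠ Finset.univ →
          H Finset.univ - H Sᶜ ≤ ∑ i ∈ S, R i) ∧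
        x = ∑ i, R i} Rco)
    (μ : ℝ)
    (hμ : IsLeast {x : ℝ | ∃ P : Finset (Finset (Fin m)),
        IsPartitionOf P Finset.univ ∧ 2 ≤ P.card ∧
        x = ((∑ S ∈ P, H S) - H Finset.univ) / ((P.card : ℝ) - 1)} μ) :
    Rco = H Finset.univ - μ := by
  obtain ⟨P₀, hP₀, hcard₀, hμ₀⟩ := hμ.1
  have hne : (univ : Finset (Fin m)).Nonempty := by
    obtain ⟨S, hS⟩ := card_pos.1 (by omega : 0 < P₀.card)
    obtain ⟨i, -⟩ := hP₀.1 S hS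
    exact ⟨i, mem_univ i⟩
  apply le_antisymm
  · obtain ⟨R, hRle, P, hP, hRP⟩ := exists_sum_le_and_sum_eq_partition (fun S => H S - μ)
      fun S T _ => by linarith [hHsub S T]
    have hRsum : ∑ i, R i = H univ - μ := le_antisymm (hRle univ hne)
      (hRP ▸ sub_le_sum_sub_of_isPartitionOf H (fun P hP hk => hμ.2 ⟨P, hP, hk, rfl⟩) hne hP)
    refine hRco.2 ⟨R, fun S _ hS => ?_, hRsum.symm⟩
    have := hRle Sᶜ ((compl_ne_univ_iff_nonempty Sᶜ).1 (by rwa [compl_compl]))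
    linarith [sum_add_sum_compl S R]
  · obtain ⟨R, hR, rfl⟩ := hRco.1
    have hk : (0 : ℝ) < P₀.card - 1 := by
      have : (2 : ℝ) ≤ P₀.card := by exact_mod_cast hcard₀
      linarith
    have := card_sub_one_mul_le_of_feasible H hR hP₀ hcard₀
    rw [hμ₀, sub_le_comm, le_div_iff₀ hk]
    linarith

/-- the minimum sum-rate for omniscience satisfies
`R_CO = H(X_M) − min_P ((∑_{S∈P} H(X_S) − H(X_M)) / (|P| − 1))`, the minimum being over
partitions `P` of `M` with `|P| ≥ 2`. -/
theorem rco_partition_formula {m : ℕ} (hm : 2 ≤ m)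
    (H : Finset (Fin m) → ℝ) (hH0 : H ∅ = 0)
    (hHmono : ∀ S T : Finset (Fin m), S ⊆ T → H S ≤ H T)
    (hHsub : ∀ S T : Finset (Fin m), H (S ∪ T) + H (S ∩ T) ≤ H S + H T)
    (Rco : ℝ)
    (hRco : IsLeast {x : ℝ | ∃ R : Fin m → ℝ,
        (∀ S : Finset (Fin m), S.Nonempty → S ≠ Finset.univ →
          H Finset.univ - H Sᶜ ≤ ∑ i ∈ S, R i) ∧
        x = ∑ i, R i} Rco)
    (μ : ℝ)
    (hμ : IsLeast {x : ℝ | ∃ P : Finset (Finset (Fin m)),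
        IsPartitionOf P Finset.univ ∧ 2 ≤ P.card ∧
        x = ((∑ S ∈ P, H S) - H Finset.univ) / ((P.card : ℝ) - 1)} μ) :
    Rco = H Finset.univ - μ :=
  rco_partition_formula_general H hHsub Rco hRco μ hμ
end

section
/- Let Z be an optimal solution of max{∑_i Z_i : Z(S) ≤ β − H(X_{Sᶜ}|X_S) ∀ nonempty S ⊆ M}, and suppose the constraints for sets S₁ and S₂ are tight: Z(S₁) = β − H(X_{S₁ᶜ}|X_{S₁}) and Z(S₂) = β − H(X_{S₂ᶜ}|X_{S₂}). If S₁ ∩ S₂ ≠ ∅, then the constraint for S₁ ∪ S₂ is also tight: Z(S₁ ∪ S₂) = β − H(X_{(S₁∪S₂)ᶜ}|X_{S₁∪S₂}). -/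
open Finset

/-- if `Z` is an optimal (in particular feasible) solution of
`max ∑ Z i` subject to `Z(S) ≤ β − H(X_{Sᶜ}|X_S) = β − (H(M) − H(S))` for all nonempty
`S`, and the constraints for `S₁` and `S₂` are tight with `S₁ ∩ S₂ ≠ ∅`, then the
constraint for `S₁ ∪ S₂` is also tight. -/
theorem tight_sets_union_tight {m : ℕ}
    (H : Finset (Fin m) → ℝ) (hH0 : H ∅ = 0)
    (hHmono : ∀ S T : Finset (Fin m), S ⊆ T → H S ≤ H T)
    (hHsub : ∀ S T : Finset (Fin m), H (S ∪ T) + H (S ∩ T) ≤ H S + H T)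
    (β : ℝ) (Z : Fin m → ℝ)
    (hfeas : ∀ S : Finset (Fin m), S.Nonempty →
      ∑ i ∈ S, Z i ≤ β - (H Finset.univ - H S))
    (hopt : ∀ Y : Fin m → ℝ,
      (∀ S : Finset (Fin m), S.Nonempty → ∑ i ∈ S, Y i ≤ β - (H Finset.univ - H S)) →
      ∑ i, Y i ≤ ∑ i, Z i)
    (S₁ S₂ : Finset (Fin m))
    (h1 : ∑ i ∈ S₁, Z i = β - (H Finset.univ - H S₁))
    (h2 : ∑ i ∈ S₂, Z i = β - (H Finset.univ - H S₂))
    (hne : (S₁ ∩ S₂).Nonempty) :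
    ∑ i ∈ S₁ ∪ S₂, Z i = β - (H Finset.univ - H (S₁ ∪ S₂)) := by
  have key : ∑ i ∈ S₁ ∪ S₂, Z i + ∑ i ∈ S₁ ∩ S₂, Z i = ∑ i ∈ S₁, Z i + ∑ i ∈ S₂, Z i :=
    Finset.sum_union_inter
  have hu := hfeas (S₁ ∪ S₂) (hne.mono (Finset.inter_subset_left.trans Finset.subset_union_left))
  have hi := hfeas (S₁ ∩ S₂) hne
  have hs := hHsub S₁ S₂
  linarith
end

section
/- For the communication-for-omniscience problem with fractional-rate constraint n·R_i ∈ ℤ, the optimal sum-rate R_{CO,n} satisfies R_{CO,n} = ⌈n·R_CO⌉/n, and hence R_{CO,n} − R_CO ≤ 1/n; moreover if n·R_CO ∈ ℤ then R_{CO,n} = R_CO. -/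
open Finset


open Finset

/-- A partition of `S` into nonempty, pairwise disjoint parts. -/
def FRIsPart {m : ℕ} (S : Finset (Fin m)) (P : Finset (Finset (Fin m))) : Prop :=
  (∀ A ∈ P, A.Nonempty) ∧ (∀ A ∈ P, ∀ A' ∈ P, A ≠ A' → Disjoint A A') ∧ P.sup id = S

open Classical in
noncomputable def FRparts {m : ℕ} (S : Finset (Fin m)) : Finset (Finset (Finset (Fin m))) :=
  (S.powerset.powerset).filter (fun P => FRIsPart S P)

lemma FRmem_parts {m : ℕ} {S : Finset (Fin m)} {P : Finset (Finset (Fin m))} :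
    P ∈ FRparts S ↔ FRIsPart S P := by
  classical
  constructor
  · intro h; exact (Finset.mem_filter.1 h).2
  · intro h
    refine Finset.mem_filter.2 ⟨?_, h⟩
    refine Finset.mem_powerset.2 (fun A hA => Finset.mem_powerset.2 ?_)
    have : A ≤ P.sup id := Finset.le_sup (f := id) hA
    rw [h.2.2] at this; exact this

lemma FRparts_nonempty {m : ℕ} (S : Finset (Fin m)) : (FRparts S).Nonempty := by
  classical
  refine ⟨S.image (fun a => ({a} : Finset (Fin m))), FRmem_parts.2 ⟨?_, ?_, ?_⟩⟩
  · intro A hA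
    obtain ⟨a, _, rfl⟩ := Finset.mem_image.1 hA
    exact Finset.singleton_nonempty a
  · intro A hA A' hA' hne
    obtain ⟨a, _, rfl⟩ := Finset.mem_image.1 hA
    obtain ⟨a', _, rfl⟩ := Finset.mem_image.1 hA'
    simp only [Finset.disjoint_singleton_left, Finset.mem_singleton]
    intro h; exact hne (by rw [h])
  · ext x
    simp only [Finset.mem_sup, Finset.mem_image, id]
    constructor
    · rintro ⟨A, ⟨a, ha, rfl⟩, hx⟩
      rw [Finset.mem_singleton] at hx; rwa [hx]
    · intro hx; exact ⟨{x}, ⟨x, hx, rfl⟩, Finset.mem_singleton_self x⟩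

noncomputable def FRghat {m : ℕ} (f : Finset (Fin m) → ℝ) (S : Finset (Fin m)) : ℝ :=
  ((FRparts S).image (fun P => ∑ A ∈ P, f A)).min'
    ((FRparts_nonempty S).image _)

lemma FRghat_le {m : ℕ} (f : Finset (Fin m) → ℝ) {S : Finset (Fin m)}
    {P : Finset (Finset (Fin m))} (h : FRIsPart S P) :
    FRghat f S ≤ ∑ A ∈ P, f A :=
  Finset.min'_le _ _ (Finset.mem_image_of_mem _ (FRmem_parts.2 h))

lemma FRghat_exists {m : ℕ} (f : Finset (Fin m) → ℝ) (S : Finset (Fin m)) :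
    ∃ P : Finset (Finset (Fin m)), FRIsPart S P ∧ FRghat f S = ∑ A ∈ P, f A := by
  have h := Finset.min'_mem ((FRparts S).image (fun P => ∑ A ∈ P, f A))
    ((FRparts_nonempty S).image _)
  obtain ⟨P, hP, hval⟩ := Finset.mem_image.1 h
  exact ⟨P, FRmem_parts.1 hP, hval.symm⟩

lemma FRghat_empty {m : ℕ} (f : Finset (Fin m) → ℝ) : FRghat f (∅ : Finset (Fin m)) = 0 := by
  have h1 : FRghat f (∅ : Finset (Fin m)) ≤ 0 := by
    have := FRghat_le f (S := (∅ : Finset (Fin m))) (P := ∅) ⟨by simp, by simp, by simp⟩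
    simpa using this
  obtain ⟨P, hP, hval⟩ := FRghat_exists f (∅ : Finset (Fin m))
  have hPempty : P = ∅ := by
    by_contra h
    obtain ⟨A, hA⟩ := Finset.nonempty_iff_ne_empty.2 h
    obtain ⟨a, ha⟩ := hP.1 A hA
    have : A ≤ P.sup id := Finset.le_sup (f := id) hA
    rw [hP.2.2] at this
    exact absurd (this ha) (Finset.notMem_empty a)
  rw [hPempty] at hval; simp at hval
  linarith

lemma FRchain {m : ℕ} (f : Finset (Fin m) → ℝ)
    (hfsub : ∀ S T : Finset (Fin m), f (S ∪ T) + f (S ∩ T) ≤ f S + f T)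
    (B : Finset (Fin m)) (T : Finset (Finset (Fin m)))
    (hdis : ∀ A ∈ T, ∀ A' ∈ T, A ≠ A' → Disjoint A A') :
    f (B ∪ T.sup id) + ∑ A ∈ T, f (A ∩ B) ≤ f B + ∑ A ∈ T, f A := by
  classical
  induction T using Finset.induction_on with
  | empty => simp
  | @insert A s hAs ih =>
    have hdis' : ∀ A' ∈ s, ∀ A'' ∈ s, A' ≠ A'' → Disjoint A' A'' :=
      fun A' h1 A'' h2 h3 => hdis A' (Finset.mem_insert_of_mem h1) A''
        (Finset.mem_insert_of_mem h2) h3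
    have hAdis : Disjoint A (s.sup id) := by
      rw [Finset.disjoint_sup_right]
      intro A' hA'
      exact hdis A (Finset.mem_insert_self A s) A' (Finset.mem_insert_of_mem hA')
        (fun h => hAs (h ▸ hA'))
    have ihs := ih hdis'
    have hsub := hfsub (B ∪ s.sup id) A
    have heq1 : (B ∪ s.sup id) ∪ A = B ∪ (insert A s).sup id := by
      rw [Finset.sup_insert]
      simp only [id]
      rw [Finset.sup_eq_union]
      ext a; simp only [Finset.mem_union]; tauto
    have heq2 : (B ∪ s.sup id) ∩ A = A ∩ B := by
      ext a
      simp only [Finset.mem_inter, Finset.mem_union]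
      have hd := Finset.disjoint_left.1 hAdis
      constructor
      · rintro ⟨h1 | h1, h2⟩
        · exact ⟨h2, h1⟩
        · exact absurd h1 (hd h2)
      · rintro ⟨h1, h2⟩; exact ⟨Or.inl h2, h1⟩
    rw [heq1, heq2] at hsub
    rw [Finset.sum_insert hAs, Finset.sum_insert hAs]
    linarith

lemma FRkey {m : ℕ} (f : Finset (Fin m) → ℝ)
    (hfsub : ∀ S T : Finset (Fin m), f (S ∪ T) + f (S ∩ T) ≤ f S + f T)
    (X Z : Finset (Fin m)) (i : Fin m) (hZX : Z ⊆ X) (hiX : i ∉ X) :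
    FRghat f (insert i X) + FRghat f Z ≤ FRghat f X + FRghat f (insert i Z) := by
  classical
  obtain ⟨P, hP, hPval⟩ := FRghat_exists f X
  obtain ⟨Q, hQ, hQval⟩ := FRghat_exists f (insert i Z)
  obtain ⟨hPne, hPdis, hPsup⟩ := hP
  obtain ⟨hQne, hQdis, hQsup⟩ := hQ
  -- the part of Q containing i
  obtain ⟨B, hBQ, hiB⟩ : ∃ B ∈ Q, i ∈ B := by
    have : i ∈ Q.sup id := by rw [hQsup]; exact Finset.mem_insert_self i Z
    simpa using (Finset.mem_sup.1 this)
  have hBsub : B ⊆ insert i Z := by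
    have : B ≤ Q.sup id := Finset.le_sup (f := id) hBQ
    rwa [hQsup] at this
  set 𝒜 : Finset (Finset (Fin m)) := P.filter (fun A => (A ∩ B).Nonempty) with h𝒜
  set ℬ : Finset (Finset (Fin m)) := P.filter (fun A => ¬ (A ∩ B).Nonempty) with hℬ
  have h𝒜P : 𝒜 ⊆ P := Finset.filter_subset _ _
  have hℬP : ℬ ⊆ P := Finset.filter_subset _ _
  have hPsplit : ∀ g : Finset (Fin m) → ℝ, ∑ A ∈ 𝒜, g A + ∑ A ∈ ℬ, g A = ∑ A ∈ P, g A :=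
    fun g => Finset.sum_filter_add_sum_filter_not P _ g
  set D : Finset (Fin m) := insert i (𝒜.sup id) with hD
  -- members of P are subsets of X
  have hPX : ∀ A ∈ P, A ⊆ X := by
    intro A hA
    have : A ≤ P.sup id := Finset.le_sup (f := id) hA
    rwa [hPsup] at this
  have hBD : B ∪ 𝒜.sup id = insert i (𝒜.sup id) := by
    ext a
    simp only [Finset.mem_union, Finset.mem_insert]
    constructor
    · rintro (ha | ha)
      · by_cases hai : a = i
        · exact Or.inl hai
        · right
          have haZ : a ∈ Z := by
            have := hBsub ha
            rw [Finset.mem_insert] at this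
            tauto
          have haX : a ∈ X := hZX haZ
          rw [← hPsup] at haX
          obtain ⟨A, hAP, haA⟩ := Finset.mem_sup.1 haX
          have hA𝒜 : A ∈ 𝒜 := Finset.mem_filter.2 ⟨hAP, ⟨a, Finset.mem_inter.2 ⟨haA, ha⟩⟩⟩
          exact Finset.mem_sup.2 ⟨A, hA𝒜, haA⟩
      · exact Or.inr ha
    · rintro (rfl | ha)
      · exact Or.inl hiB
      · exact Or.inr ha
  -- the chain inequality
  have hchain : f D + ∑ A ∈ 𝒜, f (A ∩ B) ≤ f B + ∑ A ∈ 𝒜, f A := by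
    have := FRchain f hfsub B 𝒜
      (fun A h1 A' h2 h3 => hPdis A (h𝒜P h1) A' (h𝒜P h2) h3)
    rwa [hBD] at this
  -- P' is a partition of insert i X
  have hD𝒜supX : 𝒜.sup id ⊆ X := by
    intro a ha
    obtain ⟨A, hA, haA⟩ := Finset.mem_sup.1 ha
    exact hPX A (h𝒜P hA) haA
  have hDℬ : D ∉ ℬ := fun h => hiX (hPX D (hℬP h) (Finset.mem_insert_self _ _))
  have hP' : FRIsPart (insert i X) (insert D ℬ) := by
    refine ⟨?_, ?_, ?_⟩
    · intro A hA
      rcases Finset.mem_insert.1 hA with rfl | hA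
      · exact ⟨i, Finset.mem_insert_self _ _⟩
      · exact hPne A (hℬP hA)
    · intro A hA A' hA' hne
      have hDA' : ∀ A'' ∈ ℬ, Disjoint D A'' := by
        intro A'' hA''
        rw [Finset.disjoint_left]
        intro a ha
        rcases Finset.mem_insert.1 ha with rfl | ha
        · exact fun h => hiX (hPX A'' (hℬP hA'') h)
        · obtain ⟨A₀, hA₀, haA₀⟩ := Finset.mem_sup.1 ha
          have hA₀ne : A₀ ≠ A'' := by
            intro h
            have : ¬ (A'' ∩ B).Nonempty := (Finset.mem_filter.1 hA'').2
            exact this (h ▸ (Finset.mem_filter.1 hA₀).2)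
          intro h
          exact (Finset.disjoint_left.1 (hPdis A₀ (h𝒜P hA₀) A'' (hℬP hA'') hA₀ne)) haA₀ h
      rcases Finset.mem_insert.1 hA with rfl | hA
      · rcases Finset.mem_insert.1 hA' with rfl | hA'
        · exact absurd rfl hne
        · exact hDA' A' hA'
      · rcases Finset.mem_insert.1 hA' with rfl | hA'
        · exact (hDA' A hA).symm
        · exact hPdis A (hℬP hA) A' (hℬP hA') hne
    · rw [Finset.sup_insert]
      have : (ℬ.sup id : Finset (Fin m)) ⊆ X := by
        intro a ha
        obtain ⟨A, hA, haA⟩ := Finset.mem_sup.1 ha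
        exact hPX A (hℬP hA) haA
      ext a
      simp only [id, Finset.sup_eq_union, Finset.mem_union, hD, Finset.mem_insert]
      constructor
      · rintro ((rfl | ha) | ha)
        · exact Or.inl rfl
        · exact Or.inr (hD𝒜supX ha)
        · exact Or.inr (this ha)
      · rintro (rfl | ha)
        · exact Or.inl (Or.inl rfl)
        · rw [← hPsup] at ha
          obtain ⟨A, hAP, haA⟩ := Finset.mem_sup.1 ha
          by_cases hA𝒜 : (A ∩ B).Nonempty
          · exact Or.inl (Or.inr (Finset.mem_sup.2 ⟨A, Finset.mem_filter.2 ⟨hAP, hA𝒜⟩, haA⟩))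
          · exact Or.inr (Finset.mem_sup.2 ⟨A, Finset.mem_filter.2 ⟨hAP, hA𝒜⟩, haA⟩)
  -- Q' is a partition of Z
  have hQZ : ∀ A ∈ Q.erase B, i ∉ A := by
    intro A hA h
    have hne : A ≠ B := Finset.ne_of_mem_erase hA
    exact (Finset.disjoint_left.1 (hQdis A (Finset.mem_of_mem_erase hA) B hBQ hne)) h hiB
  have hQ'disj : Disjoint (Q.erase B) (𝒜.image (fun A => A ∩ B)) := by
    rw [Finset.disjoint_left]
    intro C hC hC'
    obtain ⟨A, hA, rfl⟩ := Finset.mem_image.1 hC'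
    have hCB : A ∩ B ⊆ B := Finset.inter_subset_right
    have hne : A ∩ B ≠ B := Finset.ne_of_mem_erase hC
    have hd := hQdis (A ∩ B) (Finset.mem_of_mem_erase hC) B hBQ hne
    obtain ⟨a, ha⟩ := (Finset.mem_filter.1 hA).2
    exact (Finset.disjoint_left.1 hd) ha (hCB ha)
  have hinj : ∀ A ∈ 𝒜, ∀ A' ∈ 𝒜, A ∩ B = A' ∩ B → A = A' := by
    intro A hA A' hA' heq
    by_contra hne
    obtain ⟨a, ha⟩ := (Finset.mem_filter.1 hA).2
    have ha' : a ∈ A' ∩ B := heq ▸ ha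
    exact (Finset.disjoint_left.1 (hPdis A (h𝒜P hA) A' (h𝒜P hA') hne))
      (Finset.mem_inter.1 ha).1 (Finset.mem_inter.1 ha').1
  have hQ' : FRIsPart Z ((Q.erase B) ∪ 𝒜.image (fun A => A ∩ B)) := by
    refine ⟨?_, ?_, ?_⟩
    · intro A hA
      rcases Finset.mem_union.1 hA with hA | hA
      · exact hQne A (Finset.mem_of_mem_erase hA)
      · obtain ⟨A', hA', rfl⟩ := Finset.mem_image.1 hA
        exact (Finset.mem_filter.1 hA').2
    · intro C hC C' hC' hne
      rcases Finset.mem_union.1 hC with hC | hC <;> rcases Finset.mem_union.1 hC' with hC' | hC'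
      · exact hQdis C (Finset.mem_of_mem_erase hC) C' (Finset.mem_of_mem_erase hC') hne
      · obtain ⟨A', hA', rfl⟩ := Finset.mem_image.1 hC'
        have : Disjoint C B := hQdis C (Finset.mem_of_mem_erase hC) B hBQ
          (Finset.ne_of_mem_erase hC)
        exact Finset.disjoint_of_subset_right Finset.inter_subset_right this
      · obtain ⟨A', hA', rfl⟩ := Finset.mem_image.1 hC
        have : Disjoint C' B := hQdis C' (Finset.mem_of_mem_erase hC') B hBQ
          (Finset.ne_of_mem_erase hC')
        exact (Finset.disjoint_of_subset_right Finset.inter_subset_right this).symm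
      · obtain ⟨A₁, hA₁, rfl⟩ := Finset.mem_image.1 hC
        obtain ⟨A₂, hA₂, rfl⟩ := Finset.mem_image.1 hC'
        have hA₁₂ : A₁ ≠ A₂ := fun h => hne (by rw [h])
        exact Finset.disjoint_of_subset_left Finset.inter_subset_left
          (Finset.disjoint_of_subset_right Finset.inter_subset_left
            (hPdis A₁ (h𝒜P hA₁) A₂ (h𝒜P hA₂) hA₁₂))
    · ext a
      simp only [Finset.mem_sup, Finset.mem_union, Finset.mem_image, id]
      constructor
      · rintro ⟨C, hC | hC, haC⟩
        · have haZ : a ∈ insert i Z := by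
            rw [← hQsup]
            exact Finset.mem_sup.2 ⟨C, Finset.mem_of_mem_erase hC, haC⟩
          rcases Finset.mem_insert.1 haZ with rfl | h
          · exact absurd haC (hQZ C hC)
          · exact h
        · obtain ⟨A', hA', rfl⟩ := hC
          have haB : a ∈ B := (Finset.mem_inter.1 haC).2
          have haA' : a ∈ A' := (Finset.mem_inter.1 haC).1
          have hai : a ≠ i := fun h => hiX (hPX A' (h𝒜P hA') (h ▸ haA'))
          have := hBsub haB
          rw [Finset.mem_insert] at this
          tauto
      · intro haZ
        have : a ∈ Q.sup id := by rw [hQsup]; exact Finset.mem_insert_of_mem haZ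
        obtain ⟨C, hCQ, haC⟩ := Finset.mem_sup.1 this
        by_cases hCB : C = B
        · have haB : a ∈ B := hCB ▸ haC
          have haX : a ∈ X := hZX haZ
          rw [← hPsup] at haX
          obtain ⟨A, hAP, haA⟩ := Finset.mem_sup.1 haX
          have hA𝒜 : A ∈ 𝒜 := Finset.mem_filter.2 ⟨hAP, ⟨a, Finset.mem_inter.2 ⟨haA, haB⟩⟩⟩
          exact ⟨A ∩ B, Or.inr ⟨A, hA𝒜, rfl⟩, Finset.mem_inter.2 ⟨haA, haB⟩⟩
        · exact ⟨C, Or.inl (Finset.mem_erase.2 ⟨hCB, hCQ⟩), haC⟩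
  -- put everything together
  have h1 : FRghat f (insert i X) ≤ f D + ∑ A ∈ ℬ, f A := by
    have := FRghat_le f hP'
    rwa [Finset.sum_insert hDℬ] at this
  have h2 : FRghat f Z ≤ ∑ A ∈ Q.erase B, f A + ∑ A ∈ 𝒜, f (A ∩ B) := by
    have := FRghat_le f hQ'
    rwa [Finset.sum_union hQ'disj, Finset.sum_image hinj] at this
  have h3 : ∑ A ∈ Q.erase B, f A = ∑ A ∈ Q, f A - f B := by
    rw [← Finset.add_sum_erase Q f hBQ]; ring
  have h4 := hPsplit f
  rw [hPval, hQval]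
  linarith


/-- for the communication-for-omniscience problem with integer-valued
entropies (e.g. the finite linear source) and the fractional-rate constraint
`n * R_i ∈ ℤ`, the optimal sum-rate satisfies `R_{CO,n} = ⌈n·R_CO⌉ / n`, hence
`R_{CO,n} − R_CO ≤ 1/n`, and if `n·R_CO ∈ ℤ` then `R_{CO,n} = R_CO`. -/
theorem fractional_rco {m : ℕ} (hm : 2 ≤ m) (n : ℕ) (hn : 0 < n)
    (H : Finset (Fin m) → ℝ) (hH0 : H ∅ = 0)
    (hHmono : ∀ S T : Finset (Fin m), S ⊆ T → H S ≤ H T)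
    (hHsub : ∀ S T : Finset (Fin m), H (S ∪ T) + H (S ∩ T) ≤ H S + H T)
    (hHint : ∀ S : Finset (Fin m), ∃ z : ℤ, H S = z)
    (Rco : ℝ)
    (hRco : IsLeast {x : ℝ | ∃ R : Fin m → ℝ,
        (∀ S : Finset (Fin m), S.Nonempty → S ≠ Finset.univ →
          H Finset.univ - H Sᶜ ≤ ∑ i ∈ S, R i) ∧
        x = ∑ i, R i} Rco)
    (Rcon : ℝ)
    (hRcon : IsLeast {x : ℝ | ∃ R : Fin m → ℝ,
        (∀ i : Fin m, ∃ z : ℤ, (n : ℝ) * R i = z) ∧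
        (∀ S : Finset (Fin m), S.Nonempty → S ≠ Finset.univ →
          H Finset.univ - H Sᶜ ≤ ∑ i ∈ S, R i) ∧
        x = ∑ i, R i} Rcon) :
    Rcon = (⌈(n : ℝ) * Rco⌉ : ℝ) / (n : ℝ) ∧
    Rcon - Rco ≤ 1 / (n : ℝ) ∧
    ((∃ z : ℤ, (n : ℝ) * Rco = z) → Rcon = Rco) := by
  classical
  obtain ⟨⟨Rs, hRsf, hRssum⟩, hRlb⟩ := hRco
  obtain ⟨⟨Rn0, hRn0int, hRn0f, hRn0sum⟩, hRnlb⟩ := hRcon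
  have hn' : (0:ℝ) < (n:ℝ) := by exact_mod_cast hn
  have hm0 : 0 < m := by omega
  set β : ℝ := (⌈(n : ℝ) * Rco⌉ : ℝ) / (n : ℝ) with hβdef
  have hnβ : (n:ℝ) * β = (⌈(n : ℝ) * Rco⌉ : ℝ) := by
    rw [hβdef]; field_simp
  have hRcoβ : Rco ≤ β := by
    rw [hβdef, le_div_iff₀ hn', mul_comm]
    exact Int.le_ceil _
  have hRconRco : Rco ≤ Rcon := hRlb ⟨Rn0, hRn0f, hRn0sum⟩
  have hβRcon : β ≤ Rcon := by
    choose z hz using hRn0int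
    have hzsum : (n:ℝ) * Rcon = ((∑ i, z i : ℤ) : ℝ) := by
      rw [hRn0sum, Finset.mul_sum]
      push_cast
      exact Finset.sum_congr rfl fun i _ => hz i
    have hceil : (⌈(n:ℝ)*Rco⌉ : ℤ) ≤ ∑ i, z i := by
      apply Int.ceil_le.2
      rw [← hzsum]
      exact mul_le_mul_of_nonneg_left hRconRco (le_of_lt hn')
    rw [hβdef, div_le_iff₀ hn']
    calc ((⌈(n:ℝ)*Rco⌉:ℤ):ℝ) ≤ ((∑ i, z i : ℤ):ℝ) := by exact_mod_cast hceil
      _ = (n:ℝ)*Rcon := hzsum.symm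
      _ = Rcon * n := mul_comm _ _
  -- the submodular function f
  set C : ℝ := β - H Finset.univ with hC
  set f : Finset (Fin m) → ℝ := fun S => C + H S with hf
  have hfeq : ∀ A : Finset (Fin m), f A = β - H Finset.univ + H A := by
    intro A; simp only [hf, hC]
  have hfsub : ∀ S T : Finset (Fin m), f (S ∪ T) + f (S ∩ T) ≤ f S + f T := by
    intro S T
    simp only [hf]
    have := hHsub S T
    linarith
  choose zH hzH using hHint
  have hflat : ∀ A : Finset (Fin m), ∃ zz : ℤ, (n:ℝ) * f A = zz := by
    intro A
    refine ⟨⌈(n:ℝ)*Rco⌉ - n * zH Finset.univ + n * zH A, ?_⟩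
    rw [hfeq A, hzH Finset.univ, hzH A]
    push_cast
    rw [← hnβ]
    ring
  have hunivne : (Finset.univ : Finset (Fin m)).Nonempty := ⟨⟨0, hm0⟩, Finset.mem_univ _⟩
  -- singleton-partition upper bound
  have hgle : ∀ S : Finset (Fin m), S.Nonempty → FRghat f S ≤ f S := by
    intro S hS
    have hpart : FRIsPart S {S} := by
      refine ⟨?_, ?_, by simp⟩
      · intro A hA; rw [Finset.mem_singleton.1 hA]; exact hS
      · intro A hA A' hA' hne
        rw [Finset.mem_singleton] at hA hA'
        exact absurd (hA.trans hA'.symm) hne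
    simpa using FRghat_le f hpart
  -- lower bound for f on nonempty sets, from feasibility of Rs
  have hsum_compl : ∀ A : Finset (Fin m), ∑ j ∈ Aᶜ, Rs j + ∑ j ∈ A, Rs j = Rco := by
    intro A; rw [hRssum]; exact Finset.sum_compl_add_sum A Rs
  have hRs_bound : ∀ A : Finset (Fin m), A.Nonempty → β - Rco + ∑ j ∈ A, Rs j ≤ f A := by
    intro A hA
    have hcA : H Finset.univ - H A ≤ ∑ j ∈ Aᶜ, Rs j := by
      by_cases hAu : A = Finset.univ
      · subst hAu; simp
      · have h1 : (Aᶜ : Finset (Fin m)).Nonempty :=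
          Finset.nonempty_iff_ne_empty.2
            (fun h => hAu (by rwa [Finset.compl_eq_empty_iff] at h))
        have h2 : (Aᶜ : Finset (Fin m)) ≠ Finset.univ := by
          intro h
          rw [Finset.compl_eq_univ_iff] at h
          exact Finset.nonempty_iff_ne_empty.1 hA h
        have := hRsf Aᶜ h1 h2
        rwa [compl_compl] at this
    have := hsum_compl A
    rw [hfeq A]
    linarith
  -- ghat at univ equals β
  have hguniv : FRghat f Finset.univ = β := by
    have hfU : f Finset.univ = β := by rw [hfeq]; ring
    apply le_antisymm
    · have := hgle Finset.univ hunivne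
      rwa [hfU] at this
    · obtain ⟨P, hP, hval⟩ := FRghat_exists f Finset.univ
      rw [hval]
      have hPne' : P.Nonempty := by
        by_contra h
        rw [Finset.not_nonempty_iff_eq_empty] at h
        subst h
        have h2 : (∅ : Finset (Fin m)) = Finset.univ := by simpa using hP.2.2
        exact (Finset.nonempty_iff_ne_empty.1 hunivne) h2.symm
      have hbd : ∀ A ∈ P, β - Rco + ∑ j ∈ A, Rs j ≤ f A :=
        fun A hA => hRs_bound A (hP.1 A hA)
      have hdouble : ∑ A ∈ P, ∑ j ∈ A, Rs j = Rco := by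
        rw [hRssum]
        have hpd : Set.PairwiseDisjoint (↑P : Set (Finset (Fin m))) id :=
          fun A hA A' hA' hne => hP.2.1 A hA A' hA' hne
        calc ∑ A ∈ P, ∑ j ∈ A, Rs j = ∑ j ∈ P.biUnion id, Rs j :=
              (Finset.sum_biUnion hpd).symm
          _ = ∑ j ∈ P.sup id, Rs j := by rw [← Finset.sup_eq_biUnion]
          _ = ∑ j, Rs j := by rw [hP.2.2]
      have hsumbd : ∑ A ∈ P, (β - Rco + ∑ j ∈ A, Rs j) ≤ ∑ A ∈ P, f A :=
        Finset.sum_le_sum hbd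
      rw [Finset.sum_add_distrib, Finset.sum_const, hdouble, nsmul_eq_mul] at hsumbd
      have hcard : (1:ℝ) ≤ (P.card : ℝ) := by
        exact_mod_cast Finset.card_pos.2 hPne'
      nlinarith [sub_nonneg.2 hRcoβ]
  -- lattice values of ghat
  choose zf hzf using hflat
  have hglat : ∀ S : Finset (Fin m), ∃ zz : ℤ, (n:ℝ) * FRghat f S = zz := by
    intro S
    obtain ⟨P, hP, hval⟩ := FRghat_exists f S
    refine ⟨∑ A ∈ P, zf A, ?_⟩
    rw [hval, Finset.mul_sum]
    push_cast
    exact Finset.sum_congr rfl fun A _ => hzf A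
  -- the chain of sets
  set Ak : ℕ → Finset (Fin m) := fun k => Finset.univ.filter (fun j => (j:ℕ) < k) with hAk
  have hAk0 : Ak 0 = ∅ := by ext j; simp [hAk]
  have hAkm : Ak m = Finset.univ := by ext j; simp [hAk, j.isLt]
  have hAkins : ∀ i : Fin m, Ak ((i:ℕ)+1) = insert i (Ak (i:ℕ)) := by
    intro i; ext j
    simp only [hAk, Finset.mem_filter, Finset.mem_univ, true_and, Finset.mem_insert]
    rw [Nat.lt_succ_iff_lt_or_eq]
    constructor
    · rintro (h | h)
      · exact Or.inr h
      · exact Or.inl (Fin.ext h)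
    · rintro (rfl | h)
      · exact Or.inr rfl
      · exact Or.inl h
  have hiAk : ∀ i : Fin m, i ∉ Ak (i:ℕ) := by intro i; simp [hAk]
  -- the greedy point
  set y : Fin m → ℝ := fun i => FRghat f (Ak ((i:ℕ)+1)) - FRghat f (Ak (i:ℕ)) with hy
  have hysum : ∑ i, y i = β := by
    have h := Fin.sum_univ_eq_sum_range (fun k => FRghat f (Ak (k+1)) - FRghat f (Ak k)) m
    simp only [hy]
    rw [h, Finset.sum_range_sub (fun k => FRghat f (Ak k)), hAkm, hAk0, FRghat_empty, hguniv]
    ring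
  have hup : ∀ T : Finset (Fin m), ∑ i ∈ T, y i ≤ FRghat f T := by
    intro T
    set inc : Fin m → ℝ :=
      fun i => FRghat f (T ∩ Ak ((i:ℕ)+1)) - FRghat f (T ∩ Ak (i:ℕ)) with hincdef
    have hinc0 : ∀ i : Fin m, i ∉ T → inc i = 0 := by
      intro i hiT
      have heq : T ∩ Ak ((i:ℕ)+1) = T ∩ Ak (i:ℕ) := by
        rw [hAkins i]
        ext a
        simp only [Finset.mem_inter, Finset.mem_insert]
        constructor
        · rintro ⟨haT, rfl | haA⟩
          · exact absurd haT hiT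
          · exact ⟨haT, haA⟩
        · rintro ⟨haT, haA⟩
          exact ⟨haT, Or.inr haA⟩
      simp [hincdef, heq]
    have hstep : ∀ i ∈ T, y i ≤ inc i := by
      intro i hiT
      have hkey := FRkey f hfsub (Ak (i:ℕ)) (T ∩ Ak (i:ℕ)) i
        Finset.inter_subset_right (hiAk i)
      have h1 : insert i (Ak (i:ℕ)) = Ak ((i:ℕ)+1) := (hAkins i).symm
      have h2 : insert i (T ∩ Ak (i:ℕ)) = T ∩ Ak ((i:ℕ)+1) := by
        rw [hAkins i]
        ext a
        simp only [Finset.mem_inter, Finset.mem_insert]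
        constructor
        · rintro (rfl | ⟨haT, haA⟩)
          · exact ⟨hiT, Or.inl rfl⟩
          · exact ⟨haT, Or.inr haA⟩
        · rintro ⟨haT, rfl | haA⟩
          · exact Or.inl rfl
          · exact Or.inr ⟨haT, haA⟩
      rw [h1, h2] at hkey
      simp only [hy, hincdef]
      linarith
    have htel : ∑ i, inc i = FRghat f T := by
      have h := Fin.sum_univ_eq_sum_range
        (fun k => FRghat f (T ∩ Ak (k+1)) - FRghat f (T ∩ Ak k)) m
      simp only [hincdef]
      rw [h, Finset.sum_range_sub (fun k => FRghat f (T ∩ Ak k)), hAkm, hAk0,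
        Finset.inter_univ, Finset.inter_empty, FRghat_empty]
      ring
    calc ∑ i ∈ T, y i ≤ ∑ i ∈ T, inc i := Finset.sum_le_sum hstep
      _ = ∑ i, inc i := Finset.sum_subset (Finset.subset_univ T)
            (fun x _ hx => hinc0 x hx)
      _ = FRghat f T := htel
  have hyfeas : ∀ S : Finset (Fin m), S.Nonempty → S ≠ Finset.univ →
      H Finset.univ - H Sᶜ ≤ ∑ i ∈ S, y i := by
    intro S hSne hSu
    have hScne : (Sᶜ : Finset (Fin m)).Nonempty :=
      Finset.nonempty_iff_ne_empty.2
        (fun h => hSu (by rwa [Finset.compl_eq_empty_iff] at h))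
    have h1 : ∑ i ∈ Sᶜ, y i ≤ f Sᶜ := (hup Sᶜ).trans (hgle Sᶜ hScne)
    have h2 : ∑ i ∈ S, y i + ∑ i ∈ Sᶜ, y i = β := by
      rw [← hysum]; exact Finset.sum_add_sum_compl S y
    have h3 := hfeq Sᶜ
    linarith
  have hylat : ∀ i : Fin m, ∃ zz : ℤ, (n:ℝ) * y i = zz := by
    intro i
    obtain ⟨z1, hz1⟩ := hglat (Ak ((i:ℕ)+1))
    obtain ⟨z2, hz2⟩ := hglat (Ak (i:ℕ))
    refine ⟨z1 - z2, ?_⟩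
    simp only [hy]
    push_cast
    rw [mul_sub, hz1, hz2]
  have hRconβ : Rcon ≤ β := hRnlb ⟨y, hylat, hyfeas, hysum.symm⟩
  have hmain : Rcon = β := le_antisymm hRconβ hβRcon
  refine ⟨hmain, ?_, ?_⟩
  · have hceil : (⌈(n:ℝ)*Rco⌉ : ℝ) < (n:ℝ)*Rco + 1 := Int.ceil_lt_add_one _
    have h1n : (1/(n:ℝ)) * n = 1 := by field_simp
    rw [hmain]
    rw [sub_le_iff_le_add, hβdef, div_le_iff₀ hn']
    nlinarith
  · rintro ⟨z, hz⟩
    have hzz : (⌈(n:ℝ)*Rco⌉ : ℤ) = z := by rw [hz]; exact Int.ceil_intCast z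
    rw [hmain, hβdef, hzz, ← hz]
    field_simp
end
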